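/- arXiv:1610.09089 — 4 statements merged into one kernel-verified Lean document; each statement's English description precedes it below -/
import Mathlib

section
/- For every k and r there exists a constant c such that the k-dimensional Ramsey number R_k(ℓ; r) (the least n such that every r-coloring of the complete k-uniform hypergraph on n vertices contains a monochromatic clique of size ℓ) is at most tow_k(c·ℓ), where tow_k is the tower function with k-1 twos, i.e., tow_1(n)=n and tow_{j+1}(n)=2^{tow_j(n)}. -/
/-- Tower function: `tow 1 n = n`, `tow (k+1) n = 2 ^ tow k n` (for `k ≥ 1`). -/
def tow (k n : ℕ) : ℕ := (fun m => 2 ^ m)^[k - 1] n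

/-- Every `r`-coloring of the `k`-subsets of an `n`-element set has a
monochromatic clique of size `ℓ`. -/
def monoRamsey (n k r ℓ : ℕ) : Prop :=
  ∀ χ : Finset (Fin n) → Fin r,
    ∃ A : Finset (Fin n), A.card = ℓ ∧
      ∃ c : Fin r, ∀ e ⊆ A, e.card = k → χ e = c

namespace RamseyAux

/-- Ramsey property: every coloring of `k`-subsets of any `S : Finset ℕ` of size
`≥ n` has a monochromatic `ℓ`-subset. -/
def RP (n k r ℓ : ℕ) : Prop :=
  ∀ (S : Finset ℕ) (χ : Finset ℕ → Fin r), n ≤ S.card →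
    ∃ A ⊆ S, A.card = ℓ ∧ ∃ c : Fin r, ∀ e ⊆ A, e.card = k → χ e = c

lemma RP.mono {n n' k r ℓ : ℕ} (h : RP n k r ℓ) (hn : n ≤ n') : RP n' k r ℓ :=
  fun S χ hS => h S χ (le_trans hn hS)

lemma rp_zero {n k r : ℕ} (hk : 1 ≤ k) (hr : 1 ≤ r) : RP n k r 0 := by
  intro S χ _
  refine ⟨∅, Finset.empty_subset _, Finset.card_empty, ⟨0, hr⟩, ?_⟩
  intro e he hc
  rw [Finset.subset_empty.mp he, Finset.card_empty] at hc
  omega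

lemma rp_one (r ℓ : ℕ) (hr : 1 ≤ r) : RP (r * ℓ) 1 r ℓ := by
  intro S χ hS
  obtain ⟨c, -, hc⟩ := Finset.exists_le_card_fiber_of_mul_le_card_of_maps_to
    (f := fun v => χ {v}) (t := (Finset.univ : Finset (Fin r)))
    (fun a _ => Finset.mem_univ _)
    ⟨⟨0, hr⟩, Finset.mem_univ _⟩
    (by simpa using hS)
  obtain ⟨A, hA, hAcard⟩ := Finset.exists_subset_card_eq (n := ℓ) hc
  refine ⟨A, hA.trans (Finset.filter_subset _ _), hAcard, c, ?_⟩
  intro e he hce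
  obtain ⟨v, rfl⟩ := Finset.card_eq_one.mp hce
  have hv := hA (by simpa using he)
  exact (Finset.mem_filter.mp hv).2


lemma monoRamsey_of_RP {n k r ℓ : ℕ} (hk : 1 ≤ k) (hr : 1 ≤ r) (h : RP n k r ℓ) :
    monoRamsey n k r ℓ := by
  intro χ
  rcases Nat.eq_zero_or_pos n with rfl | hn
  · obtain ⟨A, hAS, hAcard, c, -⟩ := h ∅ (fun _ => ⟨0, hr⟩) le_rfl
    rw [Finset.subset_empty.mp hAS, Finset.card_empty] at hAcard
    refine ⟨∅, by simp [← hAcard], c, ?_⟩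
    intro e he hce
    rw [Finset.subset_empty.mp he, Finset.card_empty] at hce
    omega
  · set f : ℕ → Fin n := fun m => ⟨m % n, Nat.mod_lt _ hn⟩ with hf
    obtain ⟨A, hAS, hAcard, c, hmono⟩ := h (Finset.range n) (fun e => χ (e.image f))
      (by simp)
    have hfA : ∀ m ∈ A, (f m).val = m := by
      intro m hm
      have : m < n := by simpa using hAS hm
      simp [hf, Nat.mod_eq_of_lt this]
    refine ⟨A.image f, ?_, c, ?_⟩
    · rw [Finset.card_image_of_injOn, hAcard]
      intro a ha b hb hab
      have := congrArg Fin.val hab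
      rwa [hfA a ha, hfA b hb] at this
    · intro e' he' hce'
      have hsub : e'.image Fin.val ⊆ A := by
        intro m hm
        obtain ⟨x, hx, rfl⟩ := Finset.mem_image.mp hm
        obtain ⟨a, ha, rfl⟩ := Finset.mem_image.mp (he' hx)
        rw [hfA a ha]
        exact ha
      have hcard : (e'.image Fin.val).card = k := by
        rw [Finset.card_image_of_injective _ Fin.val_injective, hce']
      have := hmono _ hsub hcard
      rwa [Finset.image_image, show (f ∘ Fin.val) = id from ?_, Finset.image_id] at this
      funext x
      simp [hf, Nat.mod_eq_of_lt x.isLt]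

lemma graph_greedy {r : ℕ} (hr : 1 ≤ r) (χ : Finset ℕ → Fin r) :
    ∀ (t : ℕ) (P T : Finset ℕ) (g : ℕ → Fin r),
      (∀ p ∈ P, ∀ v ∈ T, p < v) →
      (∀ p ∈ P, ∀ v ∈ T, χ {p, v} = g p) →
      (∀ p ∈ P, ∀ q ∈ P, p < q → χ {p, q} = g p) →
      (r + 1) ^ t ≤ T.card →
      ∃ P' : Finset ℕ, P ⊆ P' ∧ P' ⊆ P ∪ T ∧ P'.card = P.card + t ∧
        ∃ g' : ℕ → Fin r, (∀ p ∈ P, g' p = g p) ∧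
          (∀ p ∈ P', ∀ q ∈ P', p < q → χ {p, q} = g' p) := by
  intro t
  induction t with
  | zero =>
    intro P T g hord hcross hint _
    exact ⟨P, subset_rfl, Finset.subset_union_left, by simp, g, fun _ _ => rfl, hint⟩
  | succ t ih =>
    intro P T g hord hcross hint hcard
    have hTne : T.Nonempty := by
      rw [← Finset.card_pos]
      calc 0 < (r+1)^(t+1) := Nat.pow_pos (by omega)
        _ ≤ T.card := hcard
    set x := T.min' hTne with hx
    have hxT : x ∈ T := T.min'_mem hTne
    have hxP : x ∉ P := fun hxP => lt_irrefl x (hord x hxP x hxT)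
    have hT1 : (r+1)^(t+1) - 1 ≤ (T.erase x).card := by
      rw [Finset.card_erase_of_mem hxT]; omega
    obtain ⟨b, -, hb⟩ := Finset.exists_le_card_fiber_of_mul_le_card_of_maps_to
      (s := T.erase x) (f := fun v => χ {x, v}) (t := (Finset.univ : Finset (Fin r)))
      (n := (r+1)^t)
      (fun a _ => Finset.mem_univ _) ⟨⟨0, hr⟩, Finset.mem_univ _⟩
      (by
        rw [Finset.card_univ, Fintype.card_fin]
        have : (r+1)^(t+1) = r * (r+1)^t + (r+1)^t := by ring
        have h1 : 1 ≤ (r+1)^t := Nat.one_le_pow _ _ (by omega)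
        omega)
    set T' := (T.erase x).filter (fun v => χ {x, v} = b) with hT'
    have hT'sub : T' ⊆ T.erase x := Finset.filter_subset _ _
    have hT'T : T' ⊆ T := hT'sub.trans (Finset.erase_subset _ _)
    set g₁ := Function.update g x b with hg₁
    have hg₁P : ∀ p ∈ P, g₁ p = g p := by
      intro p hp
      apply Function.update_of_ne
      intro h; rw [h] at hp; exact hxP hp
    have hordP : ∀ p ∈ P, x < p → False := fun p hp h =>
      lt_asymm h (hord p hp x hxT)
    obtain ⟨P', hPP', hP'sub, hP'card, g', hg'agree, hg'int⟩ :=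
      ih (insert x P) T' g₁
        (by
          intro p hp v hv
          have hvT : v ∈ T := hT'T hv
          rcases Finset.mem_insert.mp hp with rfl | hp
          · exact lt_of_le_of_ne (T.min'_le v hvT) (Finset.ne_of_mem_erase (hT'sub hv)).symm
          · exact hord p hp v hvT)
        (by
          intro p hp v hv
          rcases Finset.mem_insert.mp hp with rfl | hp
          · rw [hg₁, Function.update_self]
            exact (Finset.mem_filter.mp hv).2
          · rw [hg₁P p hp]
            exact hcross p hp v (hT'T hv))
        (by
          intro p hp q hq hpq
          rcases Finset.mem_insert.mp hp with hp | hp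
          · subst hp
            rcases Finset.mem_insert.mp hq with hq | hq
            · omega
            · exact absurd hpq (not_lt.mpr (le_of_lt (hord q hq x hxT)))
          · rcases Finset.mem_insert.mp hq with hq | hq
            · subst hq
              rw [hg₁P p hp]
              exact hcross p hp x hxT
            · rw [hg₁P p hp]
              exact hint p hp q hq hpq)
        hb
    refine ⟨P', (Finset.subset_insert x P).trans hPP', ?_, ?_, g', ?_, hg'int⟩
    · intro a ha
      rcases Finset.mem_union.mp (hP'sub ha) with h | h
      · rcases Finset.mem_insert.mp h with rfl | h
        · exact Finset.mem_union_right _ hxT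
        · exact Finset.mem_union_left _ h
      · exact Finset.mem_union_right _ (hT'T h)
    · rw [hP'card, Finset.card_insert_of_notMem hxP]; omega
    · intro p hp
      rw [hg'agree p (Finset.mem_insert_of_mem hp), hg₁P p hp]

lemma rp_two {r : ℕ} (hr : 1 ≤ r) (ℓ : ℕ) : RP ((r+1)^(r*ℓ)) 2 r ℓ := by
  intro S χ hS
  obtain ⟨P', -, hP'S, hP'card, g', -, hint⟩ :=
    graph_greedy hr χ (r*ℓ) ∅ S (fun _ => ⟨0, hr⟩) (by simp) (by simp) (by simp) hS
  rw [Finset.card_empty, zero_add] at hP'card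
  obtain ⟨c, -, hc⟩ := Finset.exists_le_card_fiber_of_mul_le_card_of_maps_to
    (s := P') (f := g') (t := (Finset.univ : Finset (Fin r)))
    (fun a _ => Finset.mem_univ _) ⟨⟨0, hr⟩, Finset.mem_univ _⟩
    (by rw [Finset.card_univ, Fintype.card_fin, hP'card])
  obtain ⟨A, hA, hAcard⟩ := Finset.exists_subset_card_eq (n := ℓ) hc
  have hAP' : A ⊆ P' := hA.trans (Finset.filter_subset _ _)
  refine ⟨A, hAP'.trans (by simpa using hP'S), hAcard, c, ?_⟩
  intro e he hce
  obtain ⟨a, b, hab, rfl⟩ := Finset.card_eq_two.mp hce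
  have ha : a ∈ A := he (by simp)
  have hb : b ∈ A := he (by simp)
  have hga : g' a = c := (Finset.mem_filter.mp (hA ha)).2
  have hgb : g' b = c := (Finset.mem_filter.mp (hA hb)).2
  rcases lt_or_gt_of_ne hab with h | h
  · rw [hint a (hAP' ha) b (hAP' hb) h, hga]
  · rw [Finset.pair_comm, hint b (hAP' hb) a (hAP' ha) h, hgb]

/-- Size needed for the greedy Erdős–Rado construction. -/
def F (r k : ℕ) : ℕ → ℕ → ℕ
  | _, 0 => 1
  | p, t+1 => 1 + r ^ ((p+1).choose k) * F r k (p+1) t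

lemma F_pos (r k p t : ℕ) : 1 ≤ F r k p t := by
  cases t with
  | zero => simp [F]
  | succ t => simp [F]

lemma greedy {r k : ℕ} (hr : 1 ≤ r) (hk : 1 ≤ k) (χ : Finset ℕ → Fin r) :
    ∀ (t : ℕ) (P T : Finset ℕ) (χ' : Finset ℕ → Fin r),
      (∀ p ∈ P, ∀ v ∈ T, p < v) →
      (∀ e ⊆ P, e.card = k → ∀ v ∈ T, χ (insert v e) = χ' e) →
      F r k P.card t ≤ T.card →
      ∃ P' : Finset ℕ, P ⊆ P' ∧ P' ⊆ P ∪ T ∧ P'.card = P.card + t ∧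
        ∃ χ'' : Finset ℕ → Fin r,
          (∀ e ⊆ P, e.card = k → χ'' e = χ' e) ∧
          (∀ e ⊆ P', e.card = k + 1 → ¬ e ⊆ P →
            ∃ z ∈ e, (∀ y ∈ e, y ≤ z) ∧ χ e = χ'' (e.erase z)) := by
  intro t
  induction t with
  | zero =>
    intro P T χ' hord hcross _
    exact ⟨P, subset_rfl, Finset.subset_union_left, by simp, χ',
      fun _ _ _ => rfl, fun e he _ hne => absurd he hne⟩
  | succ t ih =>
    intro P T χ' hord hcross hcard
    have hF1 := F_pos r k P.card (t+1)
    have hTne : T.Nonempty := by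
      rw [← Finset.card_pos]; omega
    set x := T.min' hTne with hx
    have hxT : x ∈ T := T.min'_mem hTne
    have hxP : x ∉ P := fun hxP => lt_irrefl x (hord x hxP x hxT)
    have hcardins : (insert x P).card = P.card + 1 :=
      Finset.card_insert_of_notMem hxP
    set Q := (insert x P).powersetCard k with hQ
    have hQcard : Q.card = (P.card + 1).choose k := by
      rw [hQ, Finset.card_powersetCard, hcardins]
    set Φ : ℕ → ({e // e ∈ Q} → Fin r) := fun v => fun e => χ (insert v e.val) with hΦ
    have hcard' : r ^ ((P.card+1).choose k) * F r k (P.card+1) t ≤ (T.erase x).card := by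
      rw [Finset.card_erase_of_mem hxT]
      have := hcard
      rw [F] at this
      omega
    obtain ⟨φ, -, hφ⟩ := Finset.exists_le_card_fiber_of_mul_le_card_of_maps_to
      (s := T.erase x) (f := Φ) (t := (Finset.univ : Finset ({e // e ∈ Q} → Fin r)))
      (n := F r k (P.card+1) t)
      (fun a _ => Finset.mem_univ _)
      ⟨fun _ => ⟨0, hr⟩, Finset.mem_univ _⟩
      (by
        rw [Finset.card_univ, Fintype.card_fun, Fintype.card_fin, Fintype.card_coe, hQcard]
        exact hcard')
    set T' := (T.erase x).filter (fun v => Φ v = φ) with hT'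
    have hT'sub : T' ⊆ T.erase x := Finset.filter_subset _ _
    have hT'T : T' ⊆ T := hT'sub.trans (Finset.erase_subset _ _)
    have hT'ne : T'.Nonempty := by
      rw [← Finset.card_pos]
      exact lt_of_lt_of_le (F_pos r k (P.card+1) t) hφ
    obtain ⟨v₀, hv₀⟩ := hT'ne
    classical
    set χm : Finset ℕ → Fin r := fun e => if h : e ∈ Q then φ ⟨e, h⟩ else χ' e with hχm
    have hmemQ : ∀ e ⊆ insert x P, e.card = k → e ∈ Q := by
      intro e he hce
      rw [hQ, Finset.mem_powersetCard]
      exact ⟨he, hce⟩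
    have hfiber : ∀ v ∈ T', ∀ (e) (h : e ∈ Q), χ (insert v e) = φ ⟨e, h⟩ := by
      intro v hv e h
      have := (Finset.mem_filter.mp hv).2
      exact congrFun this ⟨e, h⟩
    have hcrossm : ∀ e ⊆ insert x P, e.card = k → ∀ v ∈ T', χ (insert v e) = χm e := by
      intro e he hce v hv
      have hQe := hmemQ e he hce
      rw [hχm]
      simp only [dif_pos hQe]
      exact hfiber v hv e hQe
    have hagree : ∀ e ⊆ P, e.card = k → χm e = χ' e := by
      intro e he hce
      calc χm e = χ (insert v₀ e) := (hcrossm e (he.trans (Finset.subset_insert _ _)) hce v₀ hv₀).symm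
        _ = χ' e := hcross e he hce v₀ (hT'T hv₀)
    obtain ⟨P', hPP', hP'sub, hP'card, χ'', hagree₁, hhom₁⟩ :=
      ih (insert x P) T' χm
        (by
          intro p hp v hv
          rcases Finset.mem_insert.mp hp with hp | hp
          · subst hp
            exact lt_of_le_of_ne (T.min'_le v (hT'T hv)) (Finset.ne_of_mem_erase (hT'sub hv)).symm
          · exact hord p hp v (hT'T hv))
        (by
          intro e he hce v hv
          exact hcrossm e he hce v hv)
        (by rw [hcardins]; exact hφ)
    refine ⟨P', (Finset.subset_insert x P).trans hPP', ?_, ?_, χ'', ?_, ?_⟩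
    · intro a ha
      rcases Finset.mem_union.mp (hP'sub ha) with h | h
      · rcases Finset.mem_insert.mp h with h | h
        · exact Finset.mem_union_right _ (h ▸ hxT)
        · exact Finset.mem_union_left _ h
      · exact Finset.mem_union_right _ (hT'T h)
    · rw [hP'card, hcardins]; omega
    · intro e he hce
      rw [hagree₁ e (he.trans (Finset.subset_insert _ _)) hce]
      exact hagree e he hce
    · intro e heP' hce henP
      by_cases he : e ⊆ insert x P
      · have hxe : x ∈ e := by
          by_contra hxe
          exact henP ((Finset.subset_insert_iff_of_notMem hxe).mp he)
        refine ⟨x, hxe, ?_, ?_⟩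
        · intro y hy
          rcases Finset.mem_insert.mp (he hy) with h | h
          · omega
          · exact le_of_lt (hord y h x hxT)
        · have herase : e.erase x ⊆ P := by
            intro a ha
            rcases Finset.mem_insert.mp (he (Finset.mem_of_mem_erase ha)) with h | h
            · exact absurd h (Finset.ne_of_mem_erase ha)
            · exact h
          have hec : (e.erase x).card = k := by
            rw [Finset.card_erase_of_mem hxe, hce]
            omega
          calc χ e = χ (insert x (e.erase x)) := by rw [Finset.insert_erase hxe]
            _ = χ' (e.erase x) := hcross _ herase hec x hxT
            _ = χm (e.erase x) := (hagree _ herase hec).symm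
            _ = χ'' (e.erase x) := (hagree₁ _ (herase.trans (Finset.subset_insert _ _)) hec).symm
      · exact hhom₁ e heP' hce he

lemma tow_one (n : ℕ) : tow 1 n = n := rfl

lemma tow_succ (k n : ℕ) (hk : 1 ≤ k) : tow (k+1) n = 2 ^ tow k n := by
  unfold tow
  have : k + 1 - 1 = (k - 1) + 1 := by omega
  rw [this, Function.iterate_succ_apply']

lemma tow_mono (k : ℕ) : Monotone (tow k) := by
  unfold tow
  apply Monotone.iterate
  intro a b hab
  exact Nat.pow_le_pow_right (by norm_num) hab

lemma add_tow (j a x : ℕ) (hj : 1 ≤ j) : a + tow j x ≤ tow j (a + x) := by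
  induction j with
  | zero => omega
  | succ j ih =>
    rcases Nat.eq_or_lt_of_le hj with h | h
    · rw [← h]; simp [tow_one]
    · have hj1 : 1 ≤ j := by omega
      rw [tow_succ _ _ hj1, tow_succ _ _ hj1]
      calc a + 2 ^ tow j x ≤ (a + 1) * 2 ^ tow j x := by
            have : 1 ≤ 2 ^ tow j x := Nat.one_le_two_pow
            nlinarith
        _ ≤ 2 ^ a * 2 ^ tow j x := by
            have : a + 1 ≤ 2 ^ a := Nat.lt_two_pow_self (n := a)
            exact Nat.mul_le_mul_right _ this
        _ = 2 ^ (a + tow j x) := (pow_add 2 a (tow j x)).symm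
        _ ≤ 2 ^ tow j (a + x) := Nat.pow_le_pow_right (by norm_num) (ih hj1)

lemma mul_tow (j a b x : ℕ) (hj : 2 ≤ j) :
    a * tow j x + b ≤ tow j (x + a + b) := by
  induction j with
  | zero => omega
  | succ j ih =>
    have hexp : ∀ y : ℕ, a * 2 ^ y + b ≤ 2 ^ (y + a + b) := by
      intro y
      have h1 : 1 ≤ 2 ^ y := Nat.one_le_two_pow
      have h2 : a + b ≤ 2 ^ (a + b) := le_of_lt (Nat.lt_two_pow_self (n := _))
      calc a * 2 ^ y + b ≤ (a + b) * 2 ^ y := by nlinarith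
        _ ≤ 2 ^ (a + b) * 2 ^ y := Nat.mul_le_mul_right _ h2
        _ = 2 ^ (y + a + b) := by rw [← pow_add]; ring_nf
    rcases Nat.eq_or_lt_of_le hj with h | h
    · have hj1 : j = 1 := by omega
      subst hj1
      rw [tow_succ _ _ le_rfl, tow_succ _ _ le_rfl, tow_one, tow_one]
      exact hexp x
    · have hj2 : 2 ≤ j := by omega
      have hj1 : 1 ≤ j := by omega
      rw [tow_succ _ _ hj1, tow_succ _ _ hj1]
      calc a * 2 ^ tow j x + b ≤ 2 ^ (tow j x + a + b) := hexp _
        _ ≤ 2 ^ tow j (x + a + b) := by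
            apply Nat.pow_le_pow_right (by norm_num)
            have := add_tow j (a + b) x hj1
            calc tow j x + a + b = (a + b) + tow j x := by ring
              _ ≤ tow j ((a + b) + x) := this
              _ = tow j (x + a + b) := by ring_nf


lemma F_le (r k : ℕ) (hr : 1 ≤ r) (hk : 1 ≤ k) :
    ∀ t p, F r k p t ≤ (r+1) ^ ((p + 2*t + 1)^(k+1)) := by
  intro t
  induction t with
  | zero => intro p; exact Nat.one_le_pow _ _ (by omega)
  | succ t ih =>
    intro p
    have hIH := ih (p+1)
    have hc : (p+1).choose k ≤ (p+1)^k := Nat.choose_le_pow _ _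
    have hX : 1 ≤ F r k (p+1) t := by
      cases t <;> simp [F]
    set c := (p+1).choose k
    set X := F r k (p+1) t
    set E := (p + 1 + 2*t + 1)^(k+1) with hE
    have step1 : F r k p (t+1) ≤ (r+1)^(c+1) * X := by
      rw [F]
      have h1 : r ^ c + 1 ≤ (r+1)^(c+1) := by
        calc r ^ c + 1 ≤ (r+1)^c + 1 := by
              have := Nat.pow_le_pow_left (by omega : r ≤ r+1) c
              omega
          _ ≤ (r+1)^(c+1) := by
              have h2 : 1 ≤ (r+1)^c := Nat.one_le_pow _ _ (by omega)
              calc (r+1)^c + 1 ≤ 2 * (r+1)^c := by omega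
                _ ≤ (r+1) * (r+1)^c := Nat.mul_le_mul_right _ (by omega)
                _ = (r+1)^(c+1) := by ring
      calc 1 + r ^ c * X ≤ (r^c + 1) * X := by nlinarith
        _ ≤ (r+1)^(c+1) * X := Nat.mul_le_mul_right _ h1
    have step2 : (r+1)^(c+1) * X ≤ (r+1)^(c+1+E) := by
      calc (r+1)^(c+1) * X ≤ (r+1)^(c+1) * (r+1)^E := Nat.mul_le_mul_left _ hIH
        _ = (r+1)^(c+1+E) := (pow_add _ _ _).symm
    have hexp : c + 1 + E ≤ (p + 2*(t+1) + 1)^(k+1) := by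
      set a := p + 2*t + 2 with ha
      have h1 : c + 1 ≤ a ^ k := by
        calc c + 1 ≤ (p+1)^k + 1 := by omega
          _ ≤ (p+2)^k := by
              have := Nat.pow_lt_pow_left (show p+1 < p+2 by omega) (show k ≠ 0 by omega)
              omega
          _ ≤ a ^ k := Nat.pow_le_pow_left (by omega) _
      have h2 : a^(k+1) + a^k ≤ (a+1)^(k+1) := by
        calc a^(k+1) + a^k = (a+1) * a^k := by ring
          _ ≤ (a+1) * (a+1)^k := Nat.mul_le_mul_left _ (Nat.pow_le_pow_left (by omega) _)
          _ = (a+1)^(k+1) := by ring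
      have hEe : E = a^(k+1) := by rw [hE, ha]; ring_nf
      have : (p + 2*(t+1) + 1) = a + 1 := by omega
      rw [this, hEe] at *
      omega
    calc F r k p (t+1) ≤ (r+1)^(c+1+E) := le_trans step1 step2
      _ ≤ (r+1)^((p + 2*(t+1) + 1)^(k+1)) := Nat.pow_le_pow_right (by omega) hexp

lemma rp_step {r k m ℓ : ℕ} (hr : 1 ≤ r) (hk : 1 ≤ k) (h : RP m k r ℓ) :
    RP (F r k 0 (m+1)) (k+1) r (ℓ+1) := by
  intro S χ hS
  obtain ⟨P', -, hP'S, hP'card, χ'', -, hhom⟩ :=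
    greedy hr hk χ (m+1) ∅ S (fun _ => ⟨0, hr⟩)
      (by simp)
      (by
        intro e he hce
        rw [Finset.subset_empty.mp he, Finset.card_empty] at hce
        omega)
      (by simpa using hS)
  rw [Finset.card_empty, zero_add] at hP'card
  have hP'S' : P' ⊆ S := by
    intro a ha; simpa using hP'S ha
  have hP'ne : P'.Nonempty := by
    rw [← Finset.card_pos, hP'card]; omega
  set z := P'.max' hP'ne with hz
  have hzP' : z ∈ P' := P'.max'_mem hP'ne
  have hScard : m ≤ (P'.erase z).card := by
    rw [Finset.card_erase_of_mem hzP', hP'card]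
    omega
  obtain ⟨A, hA, hAcard, c, hc⟩ := h (P'.erase z) χ'' hScard
  have hAP' : A ⊆ P' := hA.trans (Finset.erase_subset _ _)
  have hzA : z ∉ A := fun hzA => Finset.notMem_erase z P' (hA hzA)
  refine ⟨insert z A, ?_, ?_, c, ?_⟩
  · intro a ha
    rcases Finset.mem_insert.mp ha with h' | h'
    · exact hP'S' (h' ▸ hzP')
    · exact hP'S' (hAP' h')
  · rw [Finset.card_insert_of_notMem hzA, hAcard]
  · intro e he hce
    have heP' : e ⊆ P' := by
      intro a ha
      rcases Finset.mem_insert.mp (he ha) with h' | h'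
      · exact h' ▸ hzP'
      · exact hAP' h'
    have hene : ¬ e ⊆ (∅ : Finset ℕ) := by
      intro h'
      rw [Finset.subset_empty.mp h', Finset.card_empty] at hce
      omega
    obtain ⟨z', hz'e, hz'max, hχe⟩ := hhom e heP' hce hene
    have herase : e.erase z' ⊆ A := by
      by_cases hze : z ∈ e
      · have : z' = z := le_antisymm (P'.le_max' z' (heP' hz'e)) (hz'max z hze)
        subst this
        intro a ha
        rcases Finset.mem_insert.mp (he (Finset.mem_of_mem_erase ha)) with h' | h'
        · exact absurd h' (Finset.ne_of_mem_erase ha)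
        · exact h'
      · intro a ha
        have hae := Finset.mem_of_mem_erase ha
        rcases Finset.mem_insert.mp (he hae) with h' | h'
        · exact absurd (h' ▸ hae) hze
        · exact h'
    have hecard : (e.erase z').card = k := by
      rw [Finset.card_erase_of_mem hz'e, hce]
      omega
    rw [hχe]
    exact hc _ herase hecard

lemma main {r : ℕ} (hr : 1 ≤ r) :
    ∀ k, 1 ≤ k → ∃ c, 1 ≤ c ∧ ∀ ℓ, RP (tow k (c * ℓ)) k r ℓ := by
  have hpow : ∀ a : ℕ, (r+1)^a ≤ 2^(r*a) := by
    intro a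
    calc (r+1)^a ≤ (2^r)^a := Nat.pow_le_pow_left (Nat.lt_two_pow_self (n := r)) a
      _ = 2^(r*a) := by rw [← pow_mul]
  have key : ∀ k, 2 ≤ k → ∃ c, 1 ≤ c ∧ ∀ ℓ, RP (tow k (c * ℓ)) k r ℓ := by
    intro k hk
    induction k, hk using Nat.le_induction with
    | base =>
      refine ⟨r * r, by nlinarith, fun ℓ => ?_⟩
      apply (rp_two hr ℓ).mono
      rw [tow_succ 1 _ le_rfl, tow_one]
      calc (r+1)^(r*ℓ) ≤ 2^(r*(r*ℓ)) := hpow _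
        _ = 2^(r*r*ℓ) := by rw [mul_assoc]
    | succ k hk ih =>
      obtain ⟨c, hc1, hc⟩ := ih
      refine ⟨3*c + r + 4*k + 9, by omega, fun L => ?_⟩
      cases L with
      | zero => exact rp_zero (by omega) hr
      | succ ℓ =>
        set c₂ := 3*c + r + 4*k + 9 with hc₂
        set m := tow k (c * ℓ) with hm
        have hstep := rp_step hr (by omega : 1 ≤ k) (hc ℓ)
        apply hstep.mono
        have h1 : F r k 0 (m+1) ≤ 2 ^ (r * (2*m+3)^(k+1)) := by
          calc F r k 0 (m+1) ≤ (r+1) ^ ((0 + 2*(m+1) + 1)^(k+1)) :=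
                F_le r k hr (by omega) (m+1) 0
            _ = (r+1) ^ ((2*m+3)^(k+1)) := by ring_nf
            _ ≤ 2 ^ (r * (2*m+3)^(k+1)) := hpow _
        have h2 : tow (k+1) (c₂ * (ℓ+1)) = 2 ^ tow k (c₂ * (ℓ+1)) :=
          tow_succ k _ (by omega)
        have hmain : r * (2*m+3)^(k+1) ≤ tow k (c₂ * (ℓ+1)) := by
          obtain ⟨j, rfl⟩ : ∃ j, k = j + 1 := ⟨k - 1, by omega⟩
          have hj1 : 1 ≤ j := by omega
          set M := tow j (c * ℓ) with hM
          have hmM : m = 2 ^ M := tow_succ j _ hj1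
          have hM1 : 1 ≤ 2 ^ M := Nat.one_le_two_pow
          have h3 : 2*m+3 ≤ 2^(M+3) := by
            rw [hmM, pow_add]
            norm_num
            omega
          have h4 : r * (2*m+3)^(j+1+1) ≤ 2 ^ (r + (M+3)*(j+2)) := by
            calc r * (2*m+3)^(j+1+1) ≤ 2^r * (2^(M+3))^(j+2) := by
                  apply Nat.mul_le_mul (le_of_lt (Nat.lt_two_pow_self (n := r)))
                  exact Nat.pow_le_pow_left h3 _
              _ = 2 ^ (r + (M+3)*(j+2)) := by rw [← pow_mul, ← pow_add]
          have h5 : r + (M+3)*(j+2) ≤ tow j (c₂ * (ℓ+1)) := by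
            have h6 : r + (M+3)*(j+2) = (j+2) * M + (r + 3*(j+2)) := by ring
            have h7 : (j+2) * M + (r + 3*(j+2)) ≤ tow j (c₂ * (ℓ+1)) := by
              rcases Nat.lt_or_ge j 2 with hj | hj
              · have : j = 1 := by omega
                subst this
                rw [tow_one] at hM ⊢
                rw [hM]
                nlinarith
              · calc (j+2) * M + (r + 3*(j+2)) ≤
                    tow j (c*ℓ + (j+2) + (r + 3*(j+2))) := mul_tow j _ _ _ hj
                  _ ≤ tow j (c₂ * (ℓ+1)) := by
                      apply tow_mono
                      nlinarith
            omega
          calc r * (2*m+3)^(j+1+1) ≤ 2 ^ (r + (M+3)*(j+2)) := h4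
            _ ≤ 2 ^ tow j (c₂*(ℓ+1)) := Nat.pow_le_pow_right (by norm_num) h5
            _ = tow (j+1) (c₂*(ℓ+1)) := (tow_succ j _ hj1).symm
        calc F r k 0 (m+1) ≤ 2 ^ (r * (2*m+3)^(k+1)) := h1
          _ ≤ 2 ^ tow k (c₂ * (ℓ+1)) := Nat.pow_le_pow_right (by norm_num) hmain
          _ = tow (k+1) (c₂ * (ℓ+1)) := h2.symm
  intro k hk
  rcases Nat.lt_or_ge k 2 with h | h
  · have : k = 1 := by omega
    subst this
    exact ⟨r, hr, fun ℓ => by rw [tow_one]; exact rp_one r ℓ hr⟩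
  · exact key k h

end RamseyAux

/-- The `k`-dimensional Ramsey number for `r` colors satisfies
`R_k(ℓ; r) ≤ tow_k(c·ℓ)` for some constant `c`. -/
theorem ramsey_upper_tower (k r : ℕ) (hk : 1 ≤ k) :
    ∃ c : ℕ, ∀ ℓ : ℕ, monoRamsey (tow k (c * ℓ)) k r ℓ := by
  rcases Nat.eq_zero_or_pos r with rfl | hr
  · exact ⟨1, fun ℓ χ => (χ ∅).elim0⟩
  · obtain ⟨c, -, hc⟩ := RamseyAux.main hr k hk
    exact ⟨c, fun ℓ => RamseyAux.monoRamsey_of_RP hk hr (hc ℓ)⟩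
end

section
/- Let k ≥ 1 and let τ be a relational signature of maximal arity k. Then there is a function f : ℕ → ℕ and an n_0 ∈ ℕ such that for every finite set A with |A| > n_0 both of the following hold: (S1) for every τ-structure S with domain A and every linear order < on A, there is a subset A' ⊆ A with |A'| ≥ f(|A|) such that all <-increasing k-tuples over A' have the same atomic type in S; and (S2) the set of (k+1)-element subsets of A can be partitioned into two sets B and B' such that every subset A' ⊆ A with |A'| ≥ f(|A|) contains both a (k+1)-subset in B and a (k+1)-subset in B'. -/
/-!
Color each `k`-subset of `Fin N`, listed in `lt`-increasing order, by the atomic type of that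
tuple. This uses a bounded number `r` of colors, so the Erdős–Rado end-homogeneous argument gives
a homogeneous set of size `ℓ` as soon as `N ≥ erdosRadoBound k r ℓ`. That bound is a tower of
height about `k` in `ℓ`. In the other direction, random 2-colorings of pairs and triples
(Erdős) are lifted by Erdős–Hajnal stepping up, so `(j + 1)`-sets of `n`-bit numbers are colored
through the positions of the top bits in which consecutive elements differ. This gives
`(k + 1)`-uniform 2-colorings of `Fin N` with no monochromatic set of size
`f N = monochromaticBound (k + 1) N`, of order `√(log^{(k-1)} N)` (of order `log N` when
`k = 1`). Both requirements hold for this `f` because `erdosRadoBound k r (f N) ≤ N` for large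
`N`: a tower of height `k` over `f N` is still below `N`.
-/

open Finset

variable {α β C : Type*}

def IsMonochromatic (u : ℕ) (χ : Finset α → C) (A : Finset α) : Prop :=
  ∀ s ⊆ A, ∀ t ⊆ A, #s = u → #t = u → χ s = χ t

lemma IsMonochromatic.mono {u : ℕ} {χ : Finset α → C} {A B : Finset α}
    (h : IsMonochromatic u χ A) (hBA : B ⊆ A) : IsMonochromatic u χ B :=
  fun s hs t ht => h s (hs.trans hBA) t (ht.trans hBA)

lemma isMonochromatic_of_forall_eq {u : ℕ} {χ : Finset α → C} {A : Finset α} (c : C)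
    (h : ∀ s ⊆ A, #s = u → χ s = c) : IsMonochromatic u χ A :=
  fun s hs t ht hsu htu => (h s hs hsu).trans (h t ht htu).symm

lemma isMonochromatic_map_iff {u : ℕ} {χ : Finset β → C} {A : Finset α} (f : α ↪ β) :
    IsMonochromatic u χ (A.map f) ↔ IsMonochromatic u (χ ∘ map f) A := by
  refine ⟨fun h s hs t ht hsu htu => ?_, fun h s hs t ht hsu htu => ?_⟩
  · exact h _ (map_subset_map.2 hs) _ (map_subset_map.2 ht) (by simpa) (by simpa)
  · obtain ⟨s', hs', rfl⟩ := subset_map_iff.1 hs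
    obtain ⟨t', ht', rfl⟩ := subset_map_iff.1 ht
    exact h s' hs' t' ht' (by simpa using hsu) (by simpa using htu)

lemma exists_eq_true_and_exists_eq_false {u : ℕ} {χ : Finset α → Bool} {A : Finset α}
    (h : ¬ IsMonochromatic u χ A) :
    (∃ s ⊆ A, #s = u ∧ χ s = true) ∧ ∃ s ⊆ A, #s = u ∧ χ s = false := by
  simp only [IsMonochromatic, not_forall] at h
  obtain ⟨s, hs, t, ht, hsu, htu, hst⟩ := h
  cases hχs : χ s
  · exact ⟨⟨t, ht, htu, by simpa [hχs] using Ne.symm hst⟩, s, hs, hsu, hχs⟩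
  · exact ⟨⟨s, hs, hsu, hχs⟩, t, ht, htu, by simpa [hχs] using Ne.symm hst⟩

lemma exists_partition_powersetCard [Fintype α] [DecidableEq α] {u m : ℕ} {χ : Finset α → Bool}
    (hχ : ∀ A, IsMonochromatic u χ A → #A < m) :
    ∃ B B' : Finset (Finset α), Disjoint B B' ∧ B ∪ B' = powersetCard u (univ : Finset α) ∧
      ∀ A, m ≤ #A → (∃ b ∈ B, b ⊆ A) ∧ ∃ b' ∈ B', b' ⊆ A := by
  refine ⟨{s ∈ powersetCard u (univ : Finset α) | χ s = true},
    {s ∈ powersetCard u (univ : Finset α) | ¬ χ s = true}, disjoint_filter_filter_not _ _ _,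
    filter_union_filter_not_eq _ _, fun A hA => ?_⟩
  obtain ⟨⟨s, hsA, hs, hχs⟩, t, htA, ht, hχt⟩ :=
    exists_eq_true_and_exists_eq_false fun hmono => (hχ A hmono).not_ge hA
  exact ⟨⟨s, mem_filter.2 ⟨mem_powersetCard.2 ⟨subset_univ s, hs⟩, hχs⟩, hsA⟩,
    ⟨t, mem_filter.2 ⟨mem_powersetCard.2 ⟨subset_univ t, ht⟩, by simp [hχt]⟩, htA⟩⟩

lemma card_filter_mem_powersetCard_insert_le [DecidableEq α] (k : ℕ) (a : α) (P : Finset α) :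
    #{F ∈ powersetCard k (insert a P) | a ∈ F} ≤ (#P).choose (k - 1) :=
  calc #{F ∈ powersetCard k (insert a P) | a ∈ F}
      ≤ #((powersetCard (k - 1) P).image (insert a)) := by
        refine card_le_card fun F hF => ?_
        obtain ⟨hF, haF⟩ := mem_filter.1 hF
        obtain ⟨hFP, hFk⟩ := mem_powersetCard.1 hF
        refine mem_image.2 ⟨F.erase a, mem_powersetCard.2 ⟨?_, ?_⟩, insert_erase haF⟩
        · exact (erase_subset_erase a hFP).trans (erase_insert_subset a P)
        · rw [card_erase_of_mem haF, hFk]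
    _ ≤ (#P).choose (k - 1) := card_image_le.trans (card_powersetCard _ _).le

lemma mul_sub_one_lt_pow_succ_sub_one {Q : ℕ} (hQ : 2 ≤ Q) (t : ℕ) :
    Q * (Q ^ t - 1) < Q ^ (t + 1) - 1 := by
  have := Nat.mul_sub_one Q (Q ^ t)
  have := pow_succ' Q t
  have : Q ≤ Q * Q ^ t := Nat.le_mul_of_pos_right Q (by positivity)
  omega

/-- `2 ^ (r * (M + 1) ^ (k + 1)) = Q ^ (M + 1)` for `Q = 2 ^ (r * (M + 1) ^ k)`, which bounds the
number of color profiles at each of the `M + 1` greedy steps. -/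
def erdosRadoBound : ℕ → ℕ → ℕ → ℕ
  | 0, _, ℓ => ℓ
  | 1, r, ℓ => r * ℓ
  | k + 2, r, ℓ => 2 ^ (r * (erdosRadoBound (k + 1) r ℓ + 1) ^ (k + 1))

lemma pow_le_two_pow_mul (r e : ℕ) : r ^ e ≤ 2 ^ (r * e) := by
  rw [pow_mul]
  exact Nat.pow_le_pow_left (Nat.lt_two_pow_self).le e

section ErdosRado

variable [LinearOrder α]

def IsEndHomogeneous (k : ℕ) (χ : Finset α → C) (P S : Finset α) : Prop :=
  ∀ F ⊆ P, #F = k → ∀ x ∈ P ∪ S, ∀ y ∈ P ∪ S, (∀ f ∈ F, f < x) → (∀ f ∈ F, f < y) →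
    χ (insert x F) = χ (insert y F)

lemma IsEndHomogeneous.mono_right {k : ℕ} {χ : Finset α → C} {P S S' : Finset α}
    (h : IsEndHomogeneous k χ P S) (hS : S' ⊆ S) : IsEndHomogeneous k χ P S' :=
  fun F hF hFk x hx y hy => h F hF hFk x (union_subset_union_right hS hx) y
    (union_subset_union_right hS hy)

lemma IsEndHomogeneous.insert_of_forall_eq {k : ℕ} {χ : Finset α → C} {P S S' : Finset α} {a : α}
    (h : IsEndHomogeneous k χ P S) (ha : a ∈ S) (hPa : ∀ p ∈ P, p < a) (hS' : S' ⊆ S)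
    (haS' : ∀ x ∈ S', a < x)
    (hkey : ∀ x ∈ S', ∀ y ∈ S', ∀ F ⊆ insert a P, #F = k → a ∈ F →
      χ (insert x F) = χ (insert y F)) :
    IsEndHomogeneous k χ (insert a P) S' := by
  intro F hF hFk x hx y hy hFx hFy
  by_cases haF : a ∈ F
  · have hmem : ∀ z ∈ insert a P ∪ S', a < z → z ∈ S' := by
      intro z hz haz
      rcases mem_union.1 hz with hz | hz
      · rcases mem_insert.1 hz with rfl | hz
        · exact absurd haz (lt_irrefl z)
        · exact absurd (hPa z hz) (not_lt.2 haz.le)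
      · exact hz
    exact hkey x (hmem x hx (hFx a haF)) y (hmem y hy (hFy a haF)) F hF hFk haF
  · have hFP : F ⊆ P := fun f hf =>
      (mem_insert.1 (hF hf)).resolve_left (by rintro rfl; exact haF hf)
    have hsub : insert a P ∪ S' ⊆ P ∪ S := union_subset
      (insert_subset (mem_union_right _ ha) subset_union_left) (hS'.trans subset_union_right)
    exact h F hFP hFk x (hsub hx) y (hsub hy) hFx hFy

/-- The least point `a` of `S` joins `P`, and `S` shrinks to the largest class of points `x`
that agree on all the colors `χ (insert x F)` with `a ∈ F`. -/
lemma IsEndHomogeneous.exists_insert [Fintype C] {k Q t : ℕ} {χ : Finset α → C} {P S : Finset α}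
    (h : IsEndHomogeneous k χ P S) (hPS : ∀ p ∈ P, ∀ x ∈ S, p < x)
    (hQ : Fintype.card C ^ (#P).choose (k - 1) ≤ Q) (hQ₂ : 2 ≤ Q) (hS : Q ^ (t + 1) ≤ #S) :
    ∃ a ∈ S, ∃ S' ⊆ S, a ∉ P ∧ Q ^ t ≤ #S' ∧ (∀ p ∈ insert a P, ∀ x ∈ S', p < x) ∧
      IsEndHomogeneous k χ (insert a P) S' := by
  classical
  have hSne : S.Nonempty := card_pos.1 (lt_of_lt_of_le (by positivity) hS)
  set a := S.min' hSne
  have ha : a ∈ S := S.min'_mem hSne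
  set K := {F ∈ powersetCard k (insert a P) | a ∈ F}
  have : Nonempty C := ⟨χ ∅⟩
  have hkeys : #(univ : Finset (K → C)) * (Q ^ t - 1) < #(S.erase a) := by
    have hcard : #(univ : Finset (K → C)) ≤ Q := by
      simpa using (Nat.pow_le_pow_right Fintype.card_pos
        (card_filter_mem_powersetCard_insert_le k a P)).trans hQ
    rw [card_erase_of_mem ha]
    calc #(univ : Finset (K → C)) * (Q ^ t - 1) ≤ Q * (Q ^ t - 1) :=
          Nat.mul_le_mul_right _ hcard
      _ < Q ^ (t + 1) - 1 := mul_sub_one_lt_pow_succ_sub_one hQ₂ t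
      _ ≤ #S - 1 := by omega
  obtain ⟨c, -, hc⟩ := exists_lt_card_fiber_of_mul_lt_card_of_maps_to
    (f := fun x (F : K) => χ (insert x F)) (fun x _ => mem_univ _) hkeys
  set S' := {x ∈ S.erase a | (fun (F : K) => χ (insert x F)) = c}
  have hS'S : S' ⊆ S := (filter_subset _ _).trans (erase_subset _ _)
  have haS' : ∀ x ∈ S', a < x := fun x hx =>
    lt_of_le_of_ne (S.min'_le x (hS'S hx)) (ne_of_mem_erase (mem_filter.1 hx).1).symm
  refine ⟨a, ha, S', hS'S, fun haP => (hPS a haP a ha).false, by omega, fun p hp x hx => ?_,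
    h.insert_of_forall_eq ha (fun p hp => hPS p hp a ha) hS'S haS' fun x hx y hy F hF hFk haF => ?_⟩
  · rcases mem_insert.1 hp with rfl | hp
    · exact haS' x hx
    · exact hPS p hp x (hS'S hx)
  · have hFK : F ∈ K := mem_filter.2 ⟨mem_powersetCard.2 ⟨hF, hFk⟩, haF⟩
    exact congrFun ((mem_filter.1 hx).2.trans (mem_filter.1 hy).2.symm) ⟨F, hFK⟩

lemma IsEndHomogeneous.exists_card_eq [Fintype C] {k Q : ℕ} {χ : Finset α → C} (hQ₂ : 2 ≤ Q)
    (m : ℕ) :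
    ∀ P S : Finset α, IsEndHomogeneous k χ P S → (∀ p ∈ P, ∀ x ∈ S, p < x) →
      (∀ i < #P + m, Fintype.card C ^ i.choose (k - 1) ≤ Q) → Q ^ m ≤ #S →
      ∃ P' ⊆ P ∪ S, #P' = #P + m ∧ IsEndHomogeneous k χ P' ∅ := by
  induction m with
  | zero => exact fun P S h _ _ _ => ⟨P, subset_union_left, rfl, h.mono_right (empty_subset _)⟩
  | succ m ih =>
    intro P S h hPS hQ hS
    obtain ⟨a, ha, S', hS'S, haP, hS', hlt, h'⟩ :=
      h.exists_insert hPS (hQ #P (by omega)) hQ₂ hS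
    have hcard : #(insert a P) = #P + 1 := card_insert_of_notMem haP
    obtain ⟨P', hP', hP'card, hP'h⟩ :=
      ih (insert a P) S' h' hlt (fun i hi => hQ i (by omega)) hS'
    refine ⟨P', hP'.trans (union_subset (insert_subset (mem_union_right _ ha) subset_union_left)
      (hS'S.trans subset_union_right)), by omega, hP'h⟩

/-- On an end-homogeneous set, the color of `insert x F` is that of `insert z F` for the top
point `z`, so the `(k + 1)`-uniform problem reduces to a `k`-uniform one below `z`. -/
lemma IsEndHomogeneous.isMonochromatic {k : ℕ} {χ : Finset α → C} {P B : Finset α} {z : α}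
    (h : IsEndHomogeneous k χ P ∅) (hz : z ∈ P) (hzmax : ∀ p ∈ P, p ≤ z) (hB : B ⊆ P.erase z)
    (hmono : IsMonochromatic k (fun F => χ (insert z F)) B) : IsMonochromatic (k + 1) χ B := by
  have key : ∀ s ⊆ B, #s = k + 1 → ∃ F ⊆ B, #F = k ∧ χ s = χ (insert z F) := by
    intro s hsB hsk
    have hs : s.Nonempty := card_pos.1 (by omega)
    have hFB : s.erase (s.max' hs) ⊆ B := (erase_subset _ _).trans hsB
    refine ⟨s.erase (s.max' hs), hFB, by rw [card_erase_of_mem (s.max'_mem hs), hsk]; rfl, ?_⟩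
    conv_lhs => rw [← insert_erase (s.max'_mem hs)]
    refine h _ (hFB.trans (hB.trans (erase_subset _ _))) (by
        rw [card_erase_of_mem (s.max'_mem hs), hsk]; rfl) _
      (mem_union_left _ ((erase_subset _ _) (hB (hsB (s.max'_mem hs))))) z (mem_union_left _ hz)
      (fun f hf => lt_of_le_of_ne (s.le_max' f (mem_of_mem_erase hf)) (ne_of_mem_erase hf))
      (fun f hf => lt_of_le_of_ne (hzmax f (mem_of_mem_erase (hB (hFB hf))))
        (ne_of_mem_erase (hB (hFB hf))))
  intro s hs t ht hsk htk
  obtain ⟨F, hF, hFk, hsF⟩ := key s hs hsk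
  obtain ⟨G, hG, hGk, htG⟩ := key t ht htk
  rw [hsF, htG]
  exact hmono F hF G hG hFk hGk

theorem exists_subset_isMonochromatic_of_erdosRadoBound_le [Fintype C] (ℓ : ℕ) :
    ∀ (k : ℕ) (χ : Finset α → C) {X : Finset α}, erdosRadoBound k (Fintype.card C) ℓ ≤ #X →
      ∃ A ⊆ X, ℓ ≤ #A ∧ IsMonochromatic k χ A
  | 0, χ, X, hX => by
    obtain ⟨A, hAX, hA⟩ := exists_subset_card_eq hX
    refine ⟨A, hAX, hA.ge, fun s _ t _ hs ht => ?_⟩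
    rw [card_eq_zero.1 hs, card_eq_zero.1 ht]
  | 1, χ, X, hX => by
    classical
    obtain ⟨c, -, hc⟩ := exists_le_card_fiber_of_mul_le_card_of_maps_to
      (f := fun x => χ {x}) (fun x _ => mem_univ _) ⟨χ ∅, mem_univ _⟩
      (by simpa [erdosRadoBound] using hX)
    refine ⟨_, filter_subset _ X, hc, isMonochromatic_of_forall_eq c fun s hs hs1 => ?_⟩
    obtain ⟨x, rfl⟩ := card_eq_one.1 hs1
    exact (mem_filter.1 (hs (mem_singleton_self x))).2
  | k + 2, χ, X, hX => by
    set r := Fintype.card C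
    set M := erdosRadoBound (k + 1) r ℓ
    have hr : 0 < r := Fintype.card_pos_iff.2 ⟨χ ∅⟩
    have hQ₂ : 2 ≤ 2 ^ (r * (M + 1) ^ k) :=
      Nat.le_self_pow (Nat.mul_pos hr (by positivity)).ne' 2
    have hQ (i : ℕ) (hi : i < #(∅ : Finset α) + (M + 1)) :
        r ^ i.choose (k + 1 - 1) ≤ 2 ^ (r * (M + 1) ^ k) :=
      (pow_le_two_pow_mul r _).trans (Nat.pow_le_pow_right two_pos (Nat.mul_le_mul_left r
        ((i.choose_le_pow k).trans (Nat.pow_le_pow_left (by simp at hi; omega) k))))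
    have hS : (2 ^ (r * (M + 1) ^ k)) ^ (M + 1) ≤ #X := by
      rw [← pow_mul, mul_assoc, ← pow_succ]; exact hX
    obtain ⟨P, hPX, hPcard, hP⟩ := IsEndHomogeneous.exists_card_eq hQ₂ (M + 1) ∅ X
      (fun F hF hFk => by simp [subset_empty.1 hF] at hFk) (by simp) hQ hS
    have hPne : P.Nonempty := card_pos.1 (by simp at hPcard; omega)
    obtain ⟨A, hA, hℓ, hmono⟩ := exists_subset_isMonochromatic_of_erdosRadoBound_le ℓ (k + 1)
      (fun F => χ (insert (P.max' hPne) F)) (X := P.erase (P.max' hPne))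
      (by rw [card_erase_of_mem (P.max'_mem hPne), hPcard, card_empty, zero_add,
        Nat.add_sub_cancel])
    exact ⟨A, hA.trans ((erase_subset _ _).trans (by simpa using hPX)), hℓ,
      hP.isMonochromatic (P.max'_mem hPne) (P.le_max') hA hmono⟩

end ErdosRado

section Glue

variable [LinearOrder α] [Fintype C] [Inhabited C]

theorem exists_subset_forall_strictMono_eq (k ℓ : ℕ) (tp : (Fin k → α) → C) {X : Finset α}
    (hX : erdosRadoBound k (Fintype.card C) ℓ ≤ #X) :
    ∃ A ⊆ X, ℓ ≤ #A ∧ ∀ a b : Fin k → α, StrictMono a → StrictMono b →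
      (∀ i, a i ∈ A) → (∀ i, b i ∈ A) → tp a = tp b := by
  classical
  let χ (s : Finset α) : C := if h : #s = k then tp (s.orderEmbOfFin h) else default
  have hχ {a : Fin k → α} (ha : StrictMono a) :
      #(univ.image a) = k ∧ χ (univ.image a) = tp a := by
    have hcard : #(univ.image a) = k := by simp [card_image_of_injective _ ha.injective]
    refine ⟨hcard, ?_⟩
    simp only [χ, dif_pos hcard]
    rw [← orderEmbOfFin_unique hcard (fun i => mem_image_of_mem a (mem_univ i)) ha]
  obtain ⟨A, hAX, hℓ, hA⟩ := exists_subset_isMonochromatic_of_erdosRadoBound_le ℓ k χ hX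
  refine ⟨A, hAX, hℓ, fun a b ha hb haA hbA => ?_⟩
  rw [← (hχ ha).2, ← (hχ hb).2]
  exact hA _ (by simpa [image_subset_iff] using haA) _ (by simpa [image_subset_iff] using hbA)
    (hχ ha).1 (hχ hb).1

end Glue

section Counting

variable [Fintype α] [DecidableEq α]

open Classical in
lemma card_isMonochromatic_le (u : ℕ) (A : Finset α) :
    #{χ : Finset α → Bool | IsMonochromatic u χ A}
      ≤ 2 * 2 ^ (2 ^ Fintype.card α - (#A).choose u) := by
  set T := powersetCard u A
  let colorings (b : Bool) : Finset (Finset α → Bool) :=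
    Fintype.piFinset fun s => if s ∈ T then {b} else univ
  have hsub : ({χ | IsMonochromatic u χ A} : Finset (Finset α → Bool)) ⊆
      univ.biUnion colorings := by
    intro χ hχ
    obtain ⟨b, hb⟩ : ∃ b, ∀ s ∈ T, χ s = b := by
      rcases T.eq_empty_or_nonempty with hT | ⟨s₀, hs₀⟩
      · exact ⟨true, by simp [hT]⟩
      · refine ⟨χ s₀, fun s hs => ?_⟩
        rw [mem_powersetCard] at hs hs₀
        exact (mem_filter.1 hχ).2 s hs.1 s₀ hs₀.1 hs.2 hs₀.2
    refine mem_biUnion.2 ⟨b, mem_univ _, Fintype.mem_piFinset.2 fun s => ?_⟩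
    split_ifs with hs
    · simp [hb s hs]
    · exact mem_univ _
  have hcard (b : Bool) : #(colorings b) = 2 ^ (2 ^ Fintype.card α - (#A).choose u) := by
    have hT : #T = (#A).choose u := card_powersetCard u A
    simp only [colorings, Fintype.card_piFinset, apply_ite card, card_singleton, card_univ,
      Fintype.card_bool, prod_ite, prod_const_one, prod_const, one_mul]
    rw [filter_not, card_sdiff_of_subset (filter_subset _ _), card_univ, Fintype.card_finset]
    rw [filter_mem_eq_inter, univ_inter, hT]
  calc #{χ : Finset α → Bool | IsMonochromatic u χ A} ≤ #(univ.biUnion colorings) :=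
        card_le_card hsub
    _ ≤ ∑ b, #(colorings b) := card_biUnion_le
    _ = 2 * 2 ^ (2 ^ Fintype.card α - (#A).choose u) := by simp [hcard]

theorem exists_coloring_forall_isMonochromatic_card_lt {u m : ℕ}
    (h : 2 * Fintype.card α ^ m < 2 ^ m.choose u) :
    ∃ χ : Finset α → Bool, ∀ A, IsMonochromatic u χ A → #A < m := by
  classical
  by_contra! hbad
  set c := Fintype.card α
  have hcover : (univ : Finset (Finset α → Bool))
      ⊆ (powersetCard m univ).biUnion fun A => {χ | IsMonochromatic u χ A} := by
    intro χ _
    obtain ⟨B, hB, hmB⟩ := hbad χ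
    obtain ⟨A, hAB, hA⟩ := exists_subset_card_eq hmB
    exact mem_biUnion.2 ⟨A, mem_powersetCard.2 ⟨subset_univ A, hA⟩,
      mem_filter.2 ⟨mem_univ χ, hB.mono hAB⟩⟩
  have hle : 2 ^ 2 ^ c ≤ c.choose m * (2 * 2 ^ (2 ^ c - m.choose u)) := by
    calc 2 ^ 2 ^ c = #(univ : Finset (Finset α → Bool)) := by
          simp [c, Fintype.card_finset]
      _ ≤ ∑ A ∈ powersetCard m univ, #{χ : Finset α → Bool | IsMonochromatic u χ A} :=
          (card_le_card hcover).trans card_biUnion_le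
      _ ≤ ∑ A ∈ powersetCard m (univ : Finset α), 2 * 2 ^ (2 ^ c - m.choose u) := by
          refine sum_le_sum fun A hA => ?_
          rw [← (mem_powersetCard.1 hA).2]
          exact card_isMonochromatic_le u A
      _ = c.choose m * (2 * 2 ^ (2 ^ c - m.choose u)) := by simp [c]
  rcases lt_or_ge c m with hcm | hmc
  · simp [Nat.choose_eq_zero_of_lt hcm] at hle
  · have hchoose : m.choose u ≤ 2 ^ c :=
      (m.choose_le_two_pow u).trans (Nat.pow_le_pow_right two_pos hmc)
    have hpow : c.choose m * 2 < 2 ^ m.choose u := by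
      have := c.choose_le_pow m
      omega
    have : c.choose m * (2 * 2 ^ (2 ^ c - m.choose u)) < 2 ^ 2 ^ c := by
      calc c.choose m * (2 * 2 ^ (2 ^ c - m.choose u))
          = c.choose m * 2 * 2 ^ (2 ^ c - m.choose u) := by ring
        _ < 2 ^ m.choose u * 2 ^ (2 ^ c - m.choose u) :=
          Nat.mul_lt_mul_of_pos_right hpow (by positivity)
        _ = 2 ^ 2 ^ c := by rw [← pow_add, Nat.add_sub_cancel' hchoose]
    omega

end Counting

def topDiffBit (a b : ℕ) : ℕ := Nat.log 2 (a ^^^ b)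

lemma testBit_log_two {x : ℕ} (hx : x ≠ 0) : x.testBit (Nat.log 2 x) = true := by
  have hdiv : x / 2 ^ Nat.log 2 x = 1 :=
    Nat.div_eq_of_lt_le (by simpa using Nat.pow_log_le_self 2 hx)
      (by simpa [two_mul, pow_succ, mul_two] using Nat.lt_pow_succ_log_self one_lt_two x)
  simp [Nat.testBit_eq_decide_div_mod_eq, hdiv]

lemma testBit_topDiffBit_ne {a b : ℕ} (hab : a ≠ b) :
    a.testBit (topDiffBit a b) ≠ b.testBit (topDiffBit a b) := by
  have h := testBit_log_two (x := a ^^^ b) (by simpa [Nat.xor_eq_zero_iff] using hab)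
  rw [Nat.testBit_xor] at h
  simpa [topDiffBit] using h

lemma testBit_eq_of_topDiffBit_lt {a b i : ℕ} (hi : topDiffBit a b < i) :
    a.testBit i = b.testBit i := by
  rcases eq_or_ne a b with rfl | hab
  · rfl
  have h := Nat.testBit_lt_two_pow
    ((Nat.log_lt_iff_lt_pow one_lt_two (by simpa [Nat.xor_eq_zero_iff] using hab)).1 hi)
  rw [Nat.testBit_xor] at h
  revert h; cases a.testBit i <;> cases b.testBit i <;> simp

lemma topDiffBit_eq_of_testBit {a b i : ℕ} (hne : a.testBit i ≠ b.testBit i)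
    (habove : ∀ t, i < t → a.testBit t = b.testBit t) : topDiffBit a b = i := by
  rcases lt_trichotomy (topDiffBit a b) i with h | h | h
  · exact absurd (testBit_eq_of_topDiffBit_lt h) hne
  · exact h
  · exact absurd (habove _ h) (testBit_topDiffBit_ne fun hab => hne (hab ▸ rfl))

lemma testBit_topDiffBit_of_lt {a b : ℕ} (hab : a < b) :
    a.testBit (topDiffBit a b) = false ∧ b.testBit (topDiffBit a b) = true := by
  have hne := testBit_topDiffBit_ne hab.ne
  cases ha : a.testBit (topDiffBit a b) <;> cases hb : b.testBit (topDiffBit a b) <;>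
    simp_all
  exact absurd (Nat.lt_of_testBit _ hb ha fun t ht => (testBit_eq_of_topDiffBit_lt ht).symm)
    hab.not_gt

lemma topDiffBit_ne_of_lt_of_lt {a b c : ℕ} (hab : a < b) (hbc : b < c) :
    topDiffBit a b ≠ topDiffBit b c := by
  intro h
  have h₁ := (testBit_topDiffBit_of_lt hab).2
  have h₂ := (testBit_topDiffBit_of_lt hbc).1
  rw [h] at h₁
  simp [h₁] at h₂

lemma topDiffBit_of_lt_of_lt {a b c : ℕ} (hab : a < b) (hbc : b < c) :
    topDiffBit a c = max (topDiffBit a b) (topDiffBit b c) := by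
  have h₁ := testBit_topDiffBit_of_lt hab
  have h₂ := testBit_topDiffBit_of_lt hbc
  rcases (topDiffBit_ne_of_lt_of_lt hab hbc).lt_or_gt with h | h
  · rw [max_eq_right h.le]
    refine topDiffBit_eq_of_testBit ?_ fun t ht => ?_
    · rw [testBit_eq_of_topDiffBit_lt h, h₂.1, h₂.2]; simp
    · rw [testBit_eq_of_topDiffBit_lt (h.trans ht), testBit_eq_of_topDiffBit_lt ht]
  · rw [max_eq_left h.le]
    refine topDiffBit_eq_of_testBit ?_ fun t ht => ?_
    · rw [h₁.1, ← testBit_eq_of_topDiffBit_lt h, h₁.2]; simp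
    · rw [testBit_eq_of_topDiffBit_lt ht, testBit_eq_of_topDiffBit_lt (h.trans ht)]

lemma topDiffBit_lt {a b n : ℕ} (ha : a < 2 ^ n) (hb : b < 2 ^ n) (hab : a ≠ b) :
    topDiffBit a b < n :=
  (Nat.log_lt_iff_lt_pow one_lt_two (by simpa [Nat.xor_eq_zero_iff] using hab)).2
    (Nat.xor_lt_two_pow ha hb)

namespace Nat

lemma setOf_forall_lt_card_toFinset (s : Finset ℕ) :
    {n : ℕ | ∀ hf : (Set.ofPred (· ∈ s)).Finite, n < #hf.toFinset} = Set.Iio #s := by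
  ext n; simp

lemma strictMonoOn_nth_mem (s : Finset ℕ) : StrictMonoOn (nth (· ∈ s)) (Set.Iio #s) := by
  simpa using nth_strictMonoOn (p := (· ∈ s)) s.finite_toSet

lemma nth_mem_of_lt_card_finset {s : Finset ℕ} {i : ℕ} (h : i < #s) : nth (· ∈ s) i ∈ s :=
  nth_mem_of_lt_card (p := (· ∈ s)) s.finite_toSet (by simpa using h)

lemma image_range_nth (s : Finset ℕ) : (range #s).image (nth (· ∈ s)) = s := by
  have := image_nth_Iio_card (p := (· ∈ s)) s.finite_toSet
  simp only [finite_toSet_toFinset] at this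
  rw [← coe_inj, coe_image, coe_range, this]
  rfl

lemma nth_image_range {c : ℕ} {g : ℕ → ℕ} (hg : StrictMonoOn g (Set.Iio c)) :
    Set.EqOn g (nth (· ∈ (range c).image g)) (Set.Iio c) := by
  have hcard : #((range c).image g) = c := by
    rw [Finset.card_image_of_injOn (by simpa using hg.injOn), card_range]
  have hdom := setOf_forall_lt_card_toFinset ((range c).image g)
  rw [hcard] at hdom
  refine hdom ▸ eq_nth_of_strictMonoOn_of_mapsTo_of_surjOn g ?_ ?_ (hdom ▸ hg)
  · rw [hdom]
    rintro x (hx : x ∈ (range c).image g)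
    obtain ⟨i, hi, rfl⟩ := mem_image.1 hx
    exact ⟨i, by simpa using hi, rfl⟩
  · rw [hdom]
    exact fun i hi => show g i ∈ (range c).image g from mem_image_of_mem g (by simpa using hi)

end Nat

def diffSeq (a : ℕ → ℕ) (i : ℕ) : ℕ := topDiffBit (a i) (a (i + 1))

lemma topDiffBit_eq_sup {a : ℕ → ℕ} {u v : ℕ} (ha : StrictMonoOn a (Set.Icc u v))
    (huv : u < v) : topDiffBit (a u) (a v) = (Ico u v).sup (diffSeq a) := by
  induction v, huv using Nat.le_induction with
  | base => simp [diffSeq]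
  | succ v huv ih =>
    have hmem {i} (hi : u ≤ i) (hiv : i ≤ v + 1) : i ∈ Set.Icc u (v + 1) := ⟨hi, hiv⟩
    rw [Nat.Ico_succ_right_eq_insert_Ico (by omega : u ≤ v), sup_insert,
      ← ih (ha.mono (Set.Icc_subset_Icc_right (by omega))),
      topDiffBit_of_lt_of_lt (ha (hmem le_rfl (by omega)) (hmem (by omega) (by omega)) huv)
        (ha (hmem (by omega) (by omega)) (hmem (by omega) le_rfl) (by omega))]
    exact max_comm _ _

lemma topDiffBit_eq_of_monotoneOn {a : ℕ → ℕ} {u v : ℕ} (ha : StrictMonoOn a (Set.Icc u v))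
    (huv : u < v) (hδ : MonotoneOn (diffSeq a) (Set.Ico u v)) :
    topDiffBit (a u) (a v) = diffSeq a (v - 1) := by
  have hlast : v - 1 ∈ Set.Ico u v := ⟨by omega, by omega⟩
  rw [topDiffBit_eq_sup ha huv]
  refine le_antisymm (Finset.sup_le fun i hi => hδ (by simpa using hi) hlast ?_)
    (le_sup (by simpa using hlast))
  have := (mem_Ico.1 hi).2
  omega

lemma topDiffBit_eq_of_antitoneOn {a : ℕ → ℕ} {u v : ℕ} (ha : StrictMonoOn a (Set.Icc u v))
    (huv : u < v) (hδ : AntitoneOn (diffSeq a) (Set.Ico u v)) :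
    topDiffBit (a u) (a v) = diffSeq a u := by
  have hfirst : u ∈ Set.Ico u v := ⟨le_rfl, huv⟩
  rw [topDiffBit_eq_sup ha huv]
  exact le_antisymm (Finset.sup_le fun i hi => hδ hfirst (by simpa using hi) (mem_Ico.1 hi).1)
    (le_sup (by simpa using hfirst))

lemma exists_strictMonoOn_strictAntiOn {β : Type*} [LinearOrder β] {D : ℕ → β} {L : ℕ}
    (hne : ∀ i < L, D i ≠ D (i + 1))
    (hdesc : ∀ i, i + 2 ≤ L → D (i + 1) < D i → D (i + 2) < D (i + 1)) :
    ∃ p ≤ L, StrictMonoOn D (Set.Icc 0 p) ∧ StrictAntiOn D (Set.Icc p L) := by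
  classical
  by_cases hex : ∃ i, i < L ∧ D (i + 1) < D i
  · refine ⟨Nat.find hex, (Nat.find_spec hex).1.le, ?_, ?_⟩
    · refine strictMonoOn_of_lt_add_one Set.ordConnected_Icc fun i _ _ hi => ?_
      have hi : i < Nat.find hex := hi.2
      exact (hne i (by have := (Nat.find_spec hex).1; omega)).lt_of_le
        (not_lt.1 fun h => Nat.find_min hex hi ⟨by have := (Nat.find_spec hex).1; omega, h⟩)
    · have hdesc' : ∀ i, Nat.find hex ≤ i → i + 1 ≤ L → D (i + 1) < D i := by
        intro i hpi
        induction i, hpi using Nat.le_induction with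
        | base => exact fun _ => (Nat.find_spec hex).2
        | succ i hpi ih => exact fun hiL => hdesc i (by omega) (ih (by omega))
      exact strictAntiOn_of_add_one_lt Set.ordConnected_Icc fun i _ hi hi' =>
        hdesc' i hi.1 hi'.2
  · simp only [not_exists, not_and, not_lt] at hex
    refine ⟨L, le_rfl, strictMonoOn_of_lt_add_one Set.ordConnected_Icc fun i _ _ hi => ?_, ?_⟩
    · exact (hne i hi.2).lt_of_le (hex i hi.2)
    · intro x hx y hy hxy
      exact absurd (hy.2.trans hx.1) (not_le.2 hxy)

section SteppingUp

open Nat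

open Classical in
/-- The Erdős–Hajnal stepping-up coloring of an increasing tuple `a₀ < ⋯ < a_j`. -/
noncomputable def stepUpColor (χ : Finset ℕ → Bool) (j : ℕ) (a : ℕ → ℕ) : Bool :=
  if StrictMonoOn (diffSeq a) (Set.Iio j) ∨ StrictAntiOn (diffSeq a) (Set.Iio j) then
    χ ((range j).image (diffSeq a))
  else decide (diffSeq a 0 < diffSeq a 1)

/-- `nth (· ∈ e)` lists `e` increasingly; the value is only meaningful when `#e = j + 1`. -/
noncomputable def stepUpColoring (χ : Finset ℕ → Bool) (j : ℕ) (e : Finset ℕ) : Bool :=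
  stepUpColor χ j (nth (· ∈ e))

variable {χ : Finset ℕ → Bool} {j : ℕ}

lemma stepUpColor_of_eqOn {a D : ℕ → ℕ} (hD : Set.EqOn (diffSeq a) D (Set.Iio j))
    (hpat : StrictMonoOn D (Set.Iio j) ∨ StrictAntiOn D (Set.Iio j)) :
    stepUpColor χ j a = χ ((range j).image D) := by
  rw [stepUpColor, if_pos (by rwa [hD.congr_strictMonoOn, hD.congr_strictAntiOn]),
    image_congr (by simpa using hD)]

lemma stepUpColor_congr {a b : ℕ → ℕ} (hj : 2 ≤ j) (h : Set.EqOn a b (Set.Iio (j + 1))) :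
    stepUpColor χ j a = stepUpColor χ j b := by
  have hD : Set.EqOn (diffSeq a) (diffSeq b) (Set.Iio j) := fun i (hi : i < j) => by
    simp only [diffSeq, h (show i < j + 1 by omega), h (show i + 1 < j + 1 by omega)]
  by_cases hpat : StrictMonoOn (diffSeq a) (Set.Iio j) ∨ StrictAntiOn (diffSeq a) (Set.Iio j)
  · rw [stepUpColor_of_eqOn (Set.eqOn_refl _ _) hpat, stepUpColor_of_eqOn hD.symm hpat]
  · rw [stepUpColor, stepUpColor, if_neg hpat,
      if_neg (by rwa [← hD.congr_strictMonoOn, ← hD.congr_strictAntiOn]),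
      hD (show 0 < j by omega), hD (show 1 < j by omega)]

lemma stepUpColoring_image {g : ℕ → ℕ} (hj : 2 ≤ j) (hg : StrictMonoOn g (Set.Iio (j + 1))) :
    stepUpColoring χ j ((range (j + 1)).image g) = stepUpColor χ j g :=
  (stepUpColor_congr hj (nth_image_range hg)).symm

/-- Witness: `a (I 0), a (I 0 + 1), a (I 1 + 1), …, a (I (j - 1) + 1)`. -/
lemma exists_eqOn_diffSeq_comp_of_strictMonoOn {a I : ℕ → ℕ} {p q : ℕ} (hj : 0 < j)
    (ha : StrictMonoOn a (Set.Icc p (q + 1))) (hδ : StrictMonoOn (diffSeq a) (Set.Icc p q))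
    (hI : StrictMonoOn I (Set.Iio j)) (hIpq : Set.MapsTo I (Set.Iio j) (Set.Icc p q)) :
    ∃ h : ℕ → ℕ, StrictMonoOn h (Set.Iio (j + 1)) ∧ h j ≤ q + 1 ∧
      Set.EqOn (diffSeq (a ∘ h)) (diffSeq a ∘ I) (Set.Iio j) := by
  have hIle {s t : ℕ} (hst : s ≤ t) (ht : t < j) : I s ≤ I t :=
    hI.monotoneOn (show s < j by omega) ht hst
  have hIp {t : ℕ} (ht : t < j) : p ≤ I t := (hIpq ht).1
  have hIq {t : ℕ} (ht : t < j) : I t ≤ q := (hIpq ht).2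
  refine ⟨fun t => if t = 0 then I 0 else I (t - 1) + 1, fun s hs t ht hst => ?_, ?_, ?_⟩
  · simp only [Set.mem_Iio] at hs ht
    rcases Nat.eq_zero_or_pos s with rfl | hs0
    · simpa [show t ≠ 0 by omega] using Nat.lt_succ_of_le (hIle (zero_le _) (by omega))
    · simpa [show s ≠ 0 by omega, show t ≠ 0 by omega] using
        hI (show s - 1 < j by omega) (show t - 1 < j by omega) (by omega)
  · simpa [show j ≠ 0 by omega] using hIq (show j - 1 < j by omega)
  · intro t (ht : t < j)
    set u := if t = 0 then I 0 else I (t - 1) + 1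
    have hpu : p ≤ u ∧ u ≤ I t := by
      by_cases h0 : t = 0
      · subst h0; exact ⟨by simpa [u] using hIp ht, by simp [u]⟩
      · simpa [u, h0] using ⟨(hIp (show t - 1 < j by omega)).trans (Nat.le_succ _),
          hI (show t - 1 < j by omega) ht (by omega)⟩
    obtain ⟨hpu, huI⟩ := hpu
    have hIq' := hIq ht
    simp only [Function.comp, diffSeq, show t + 1 ≠ 0 by omega, if_false, Nat.add_sub_cancel]
    rw [topDiffBit_eq_of_monotoneOn (ha.mono (Set.Icc_subset_Icc hpu (by omega))) (by omega)
      (hδ.monotoneOn.mono fun i hi => ⟨hpu.trans hi.1, by have := hi.2; omega⟩)]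
    rfl

/-- Witness: `a (I 0), a (I 1), …, a (I (j - 1)), a (I (j - 1) + 1)`. -/
lemma exists_eqOn_diffSeq_comp_of_strictAntiOn {a I : ℕ → ℕ} {p q : ℕ} (hj : 0 < j)
    (ha : StrictMonoOn a (Set.Icc p (q + 1))) (hδ : StrictAntiOn (diffSeq a) (Set.Icc p q))
    (hI : StrictMonoOn I (Set.Iio j)) (hIpq : Set.MapsTo I (Set.Iio j) (Set.Icc p q)) :
    ∃ h : ℕ → ℕ, StrictMonoOn h (Set.Iio (j + 1)) ∧ h j ≤ q + 1 ∧
      Set.EqOn (diffSeq (a ∘ h)) (diffSeq a ∘ I) (Set.Iio j) := by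
  have hIle {s t : ℕ} (hst : s ≤ t) (ht : t < j) : I s ≤ I t :=
    hI.monotoneOn (show s < j by omega) ht hst
  have hIp {t : ℕ} (ht : t < j) : p ≤ I t := (hIpq ht).1
  have hIq {t : ℕ} (ht : t < j) : I t ≤ q := (hIpq ht).2
  refine ⟨fun t => if t < j then I t else I (j - 1) + 1, fun s hs t ht hst => ?_, ?_, ?_⟩
  · simp only [Set.mem_Iio] at hs ht
    rcases (show t < j ∨ t = j by omega) with htj | rfl
    · simpa [show s < j by omega, htj] using hI (show s < j by omega) htj hst
    · simpa [show s < t by omega] using Nat.lt_succ_of_le (hIle (show s ≤ t - 1 by omega)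
        (by omega))
  · simpa using hIq (show j - 1 < j by omega)
  · intro t (ht : t < j)
    set v := if t + 1 < j then I (t + 1) else I (j - 1) + 1
    have hv : I t < v ∧ v ≤ q + 1 := by
      by_cases htj : t + 1 < j
      · simpa [v, htj] using ⟨hI ht htj (by omega), (hIq htj).trans (Nat.le_succ q)⟩
      · obtain rfl : t = j - 1 := by omega
        simpa [v, htj] using hIq ht
    obtain ⟨hIv, hvq⟩ := hv
    have hIp' := hIp ht
    simp only [Function.comp, diffSeq, ht, if_true]
    rw [topDiffBit_eq_of_antitoneOn (ha.mono (Set.Icc_subset_Icc hIp' hvq)) hIv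
      (hδ.antitoneOn.mono fun i hi => ⟨hIp'.trans hi.1, by have := hi.2; omega⟩)]
    rfl

variable {ℓ n : ℕ} {A : Finset ℕ}

lemma stepUpColor_comp_eq (hj : 2 ≤ j) (hA : IsMonochromatic (j + 1) (stepUpColoring χ j) A)
    {h : ℕ → ℕ} (hh : StrictMonoOn h (Set.Iio (j + 1))) (hhA : h j < #A) :
    stepUpColor χ j (nth (· ∈ A) ∘ h) = stepUpColor χ j (nth (· ∈ A)) := by
  have key {g : ℕ → ℕ} (hg : StrictMonoOn g (Set.Iio (j + 1))) (hgA : g j < #A) :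
      (range (j + 1)).image (nth (· ∈ A) ∘ g) ⊆ A ∧
        #((range (j + 1)).image (nth (· ∈ A) ∘ g)) = j + 1 ∧
        stepUpColoring χ j ((range (j + 1)).image (nth (· ∈ A) ∘ g))
          = stepUpColor χ j (nth (· ∈ A) ∘ g) := by
    have hgA' : Set.MapsTo g (Set.Iio (j + 1)) (Set.Iio #A) := fun t (ht : t < j + 1) =>
      (hg.monotoneOn ht (Set.mem_Iio.2 (Nat.lt_succ_self j)) (by omega)).trans_lt hgA
    have hag := (strictMonoOn_nth_mem A).comp hg hgA'
    refine ⟨fun x hx => ?_, ?_, stepUpColoring_image hj hag⟩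
    · obtain ⟨t, ht, rfl⟩ := mem_image.1 hx
      exact nth_mem_of_lt_card_finset (hgA' (show t < j + 1 by simpa using ht))
    · rw [Finset.card_image_of_injOn (by simpa using hag.injOn), card_range]
  obtain ⟨h₁, h₂, h₃⟩ := key hh hhA
  have hjA : j < #A := by simpa [h₂] using card_le_card h₁
  obtain ⟨i₁, i₂, i₃⟩ := key (g := id) strictMonoOn_id hjA
  rw [← h₃, hA _ h₁ _ i₁ h₂ i₂, i₃]
  rfl

lemma diffSeq_nth_lt (hA₂ : A ⊆ range (2 ^ n)) {i : ℕ} (hi : i + 1 < #A) :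
    diffSeq (nth (· ∈ A)) i < n := by
  have hpow {t : ℕ} (ht : t < #A) : nth (· ∈ A) t < 2 ^ n :=
    mem_range.1 (hA₂ (nth_mem_of_lt_card_finset ht))
  exact topDiffBit_lt (hpow (by omega)) (hpow hi)
    ((strictMonoOn_nth_mem A (show i < #A by omega) hi (by omega)).ne)

/-- Every `j`-element subsequence of a monotone run of `δ` is the difference sequence of a
`(j + 1)`-subset of `A`, so its set of values gets the common color of `A`. -/
lemma apply_image_diffSeq_comp_eq_stepUpColor (hj : 2 ≤ j) (hA : IsMonochromatic (j + 1) (stepUpColoring χ j) A)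
    {p q : ℕ} (hq : q + 2 ≤ #A)
    (hrun : StrictMonoOn (diffSeq (nth (· ∈ A))) (Set.Icc p q) ∨
      StrictAntiOn (diffSeq (nth (· ∈ A))) (Set.Icc p q))
    {I : ℕ → ℕ} (hI : StrictMonoOn I (Set.Iio j)) (hIpq : Set.MapsTo I (Set.Iio j) (Set.Icc p q)) :
    χ ((range j).image (diffSeq (nth (· ∈ A)) ∘ I)) = stepUpColor χ j (nth (· ∈ A)) := by
  have ha : StrictMonoOn (nth (· ∈ A)) (Set.Icc p (q + 1)) :=
    (strictMonoOn_nth_mem A).mono fun i hi => show i < #A by have := hi.2; omega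
  obtain ⟨h, hh, hhq, hD⟩ := hrun.elim
    (fun hinc => exists_eqOn_diffSeq_comp_of_strictMonoOn (by omega) ha hinc hI hIpq)
    (fun hdec => exists_eqOn_diffSeq_comp_of_strictAntiOn (by omega) ha hdec hI hIpq)
  have hpat := hrun.imp (fun hinc => hinc.comp hI hIpq) (fun hdec => hdec.comp_strictMonoOn hI hIpq)
  rw [← stepUpColor_of_eqOn (χ := χ) hD hpat, stepUpColor_comp_eq hj hA hh (by omega)]

lemma add_one_sub_lt_of_strictMonoOn_or_strictAntiOn (hj : 2 ≤ j)
    (hχ : ∀ V ⊆ range n, IsMonochromatic j χ V → #V < ℓ) (hA₂ : A ⊆ range (2 ^ n))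
    (hA : IsMonochromatic (j + 1) (stepUpColoring χ j) A) {p q : ℕ} (hq : q + 2 ≤ #A)
    (hrun : StrictMonoOn (diffSeq (nth (· ∈ A))) (Set.Icc p q) ∨
      StrictAntiOn (diffSeq (nth (· ∈ A))) (Set.Icc p q)) :
    q + 1 - p < ℓ := by
  set δ := diffSeq (nth (· ∈ A))
  have hinj : Set.InjOn δ (Set.Icc p q) := hrun.elim (·.injOn) (·.injOn)
  have hVn : (Icc p q).image δ ⊆ range n := by
    intro x hx
    obtain ⟨i, hi, rfl⟩ := mem_image.1 hx
    exact mem_range.2 (diffSeq_nth_lt hA₂ (by have := (mem_Icc.1 hi).2; omega))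
  have hVmono : IsMonochromatic j χ ((Icc p q).image δ) := by
    refine isMonochromatic_of_forall_eq (stepUpColor χ j (nth (· ∈ A))) fun s hs hsj => ?_
    set P := (Icc p q).filter (δ · ∈ s)
    have hPs : P.image δ = s := by
      ext x
      refine ⟨fun hx => ?_, fun hx => ?_⟩
      · obtain ⟨i, hi, rfl⟩ := mem_image.1 hx
        exact (mem_filter.1 hi).2
      · obtain ⟨i, hi, rfl⟩ := mem_image.1 (hs hx)
        exact mem_image_of_mem δ (mem_filter.2 ⟨hi, hx⟩)
    have hPj : #P = j := by
      rw [← hsj, ← hPs, Finset.card_image_of_injOn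
        (hinj.mono fun i hi => by simpa using (mem_filter.1 hi).1)]
    have hIpq : Set.MapsTo (nth (· ∈ P)) (Set.Iio j) (Set.Icc p q) := fun t (ht : t < j) =>
      mem_Icc.1 (mem_filter.1 (nth_mem_of_lt_card_finset (s := P) (hPj ▸ ht))).1
    rw [← apply_image_diffSeq_comp_eq_stepUpColor hj hA hq hrun (hPj ▸ strictMonoOn_nth_mem P) hIpq,
      ← image_image, ← hPj, image_range_nth, hPs]
  have := hχ _ hVn hVmono
  rwa [Finset.card_image_of_injOn (by simpa using hinj), Nat.card_Icc] at this

lemma diffSeq_propagate (hj : 3 ≤ j) (hA : IsMonochromatic (j + 1) (stepUpColoring χ j) A)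
    {i : ℕ} (hi : i + j < #A) :
    let δ := diffSeq (nth (· ∈ A))
    (stepUpColor χ j (nth (· ∈ A)) = true → δ (i + 1) < δ i → δ (i + 2) < δ (i + 1)) ∧
    (stepUpColor χ j (nth (· ∈ A)) = false → δ i < δ (i + 1) → δ (i + 1) < δ (i + 2)) := by
  intro δ
  have hc := stepUpColor_comp_eq (χ := χ) (h := (i + ·)) (by omega) hA
    (fun s _ t _ hst => by simpa using hst) hi
  have h₀ : 0 ∈ Set.Iio j := by simp; omega
  have h₁ : 1 ∈ Set.Iio j := by simp; omega
  have h₂ : 2 ∈ Set.Iio j := by simp; omega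
  by_cases hpat : StrictMonoOn (diffSeq (nth (· ∈ A) ∘ (i + ·))) (Set.Iio j) ∨
      StrictAntiOn (diffSeq (nth (· ∈ A) ∘ (i + ·))) (Set.Iio j)
  · rcases hpat with hinc | hdec
    · exact ⟨fun _ h => absurd (hinc h₀ h₁ one_pos) (not_lt.2 h.le),
        fun _ _ => hinc h₁ h₂ one_lt_two⟩
    · exact ⟨fun _ _ => hdec h₁ h₂ one_lt_two,
        fun _ h => absurd (hdec h₀ h₁ one_pos) (not_lt.2 h.le)⟩
  · rw [stepUpColor, if_neg hpat] at hc
    refine ⟨fun hc' h => ?_, fun hc' h => ?_⟩ <;> rw [hc'] at hc <;> simp [diffSeq] at hc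
    · exact absurd hc (not_lt.2 h.le)
    · exact absurd h (not_lt.2 hc)

theorem card_lt_of_isMonochromatic_stepUpColoring (hj : 3 ≤ j)
    (hχ : ∀ V ⊆ range n, IsMonochromatic j χ V → #V < ℓ) (hA₂ : A ⊆ range (2 ^ n))
    (hA : IsMonochromatic (j + 1) (stepUpColoring χ j) A) : #A < 2 * ℓ + j := by
  by_contra! hbig
  set δ := diffSeq (nth (· ∈ A))
  set L := #A - j + 1
  have hne (i : ℕ) (hi : i < L) : δ i ≠ δ (i + 1) :=
    topDiffBit_ne_of_lt_of_lt
      (strictMonoOn_nth_mem A (show i < #A by omega) (show i + 1 < #A by omega) (by omega))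
      (strictMonoOn_nth_mem A (show i + 1 < #A by omega) (show i + 2 < #A by omega) (by omega))
  have hrun {p q : ℕ} (hq : q ≤ L) := add_one_sub_lt_of_strictMonoOn_or_strictAntiOn (by omega)
    hχ hA₂ hA (p := p) (q := q) (by omega)
  have hwin {i : ℕ} (hi : i + 2 ≤ L) := diffSeq_propagate hj hA (show i + j < #A by omega)
  -- On the first `L + 1` terms `δ` rises and then falls (or the reverse, with the colors
  -- swapped), and each monotone run is shorter than `ℓ`.
  cases hc : stepUpColor χ j (nth (· ∈ A))
  · obtain ⟨p, hpL, hanti, hmono⟩ := exists_strictMonoOn_strictAntiOn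
      (D := OrderDual.toDual ∘ δ) (L := L)
      (fun i hi h => hne i hi (OrderDual.toDual.injective h)) (fun i hi h => (hwin hi).2 hc h)
    rw [strictMonoOn_toDual_comp_iff] at hanti
    rw [strictAntiOn_toDual_comp_iff] at hmono
    have := hrun hpL (Or.inr hanti)
    have := hrun le_rfl (Or.inl hmono)
    omega
  · obtain ⟨p, hpL, hmono, hanti⟩ := exists_strictMonoOn_strictAntiOn (D := δ) (L := L)
      hne (fun i hi h => (hwin hi).1 hc h)
    have := hrun hpL (Or.inl hmono)
    have := hrun le_rfl (Or.inr hanti)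
    omega

end SteppingUp

section LowerBound

lemma two_mul_pow_lt_two_pow {N m e : ℕ} (h : (Nat.log 2 N + 1) * m + 1 < e) :
    2 * N ^ m < 2 ^ e :=
  calc 2 * N ^ m ≤ 2 * (2 ^ (Nat.log 2 N + 1)) ^ m :=
        Nat.mul_le_mul_left 2 (Nat.pow_le_pow_left (Nat.lt_pow_succ_log_self one_lt_two N).le m)
    _ = 2 ^ ((Nat.log 2 N + 1) * m + 1) := by rw [← pow_mul, pow_succ, mul_comm]
    _ < 2 ^ e := Nat.pow_lt_pow_right one_lt_two h

lemma add_one_mul_add_one_lt_choose_two (x : ℕ) :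
    (x + 1) * (2 * x + 4) + 1 < (2 * x + 4).choose 2 := by
  have h := Nat.descFactorial_eq_factorial_mul_choose (2 * x + 4) 2
  simp [Nat.descFactorial_succ, Nat.factorial] at h
  nlinarith

lemma add_one_mul_add_one_lt_choose_three (x : ℕ) :
    (x + 1) * (3 * Nat.sqrt x + 9) + 1 < (3 * Nat.sqrt x + 9).choose 3 := by
  have h := Nat.descFactorial_eq_factorial_mul_choose (3 * Nat.sqrt x + 9) 3
  simp [Nat.descFactorial_succ, Nat.factorial] at h
  nlinarith [Nat.lt_succ_sqrt x]

lemma exists_coloring_range_of_two_mul_pow_lt {u m N : ℕ} (h : 2 * N ^ m < 2 ^ m.choose u) :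
    ∃ χ : Finset ℕ → Bool, ∀ A ⊆ range N, IsMonochromatic u χ A → #A < m := by
  obtain ⟨χ, hχ⟩ := exists_coloring_forall_isMonochromatic_card_lt (α := Fin N) (by simpa using h)
  refine ⟨fun s => χ {i | (i : ℕ) ∈ s}, fun A hA hmono => ?_⟩
  set A₀ : Finset (Fin N) := {i | (i : ℕ) ∈ A}
  have hA₀ : A₀.map Fin.valEmbedding = A := by
    ext x
    simp only [A₀, mem_map, mem_filter, mem_univ, true_and, Fin.valEmbedding_apply]
    exact ⟨fun ⟨i, hi, hix⟩ => hix ▸ hi, fun hx => ⟨⟨x, mem_range.1 (hA hx)⟩, hx, rfl⟩⟩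
  rw [← hA₀, isMonochromatic_map_iff] at hmono
  have hχ' : (fun s : Finset ℕ => χ {i | (i : ℕ) ∈ s}) ∘ map Fin.valEmbedding = χ :=
    funext fun s => congrArg χ (by ext; simp [Fin.val_inj])
  rw [hχ'] at hmono
  simpa [← hA₀] using hχ _ hmono

/-- Random colorings for `u = 2, 3`, stepping up for `u ≥ 4`; for `u ≤ 1` no coloring is needed. -/
def monochromaticBound : ℕ → ℕ → ℕ
  | 0, N | 1, N => N + 1
  | 2, N => 2 * Nat.log 2 N + 4
  | 3, N => 3 * Nat.sqrt (Nat.log 2 N) + 9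
  | u + 4, N => 2 * monochromaticBound (u + 3) (Nat.clog 2 N) + (u + 3)

theorem exists_coloring_forall_card_lt_monochromaticBound (u N : ℕ) :
    ∃ χ : Finset ℕ → Bool, ∀ A ⊆ range N, IsMonochromatic u χ A →
      #A < monochromaticBound u N := by
  induction u using Nat.strong_induction_on generalizing N with
  | _ u ih =>
    match u with
    | 0 | 1 =>
      exact ⟨fun _ => false, fun A hA _ => Nat.lt_succ_of_le (by simpa using card_le_card hA)⟩
    | 2 =>
      exact exists_coloring_range_of_two_mul_pow_lt
        (two_mul_pow_lt_two_pow (add_one_mul_add_one_lt_choose_two _))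
    | 3 =>
      exact exists_coloring_range_of_two_mul_pow_lt
        (two_mul_pow_lt_two_pow (add_one_mul_add_one_lt_choose_three _))
    | u + 4 =>
      obtain ⟨χ, hχ⟩ := ih (u + 3) (by omega) (Nat.clog 2 N)
      exact ⟨stepUpColoring χ (u + 3), fun A hA hmono =>
        card_lt_of_isMonochromatic_stepUpColoring (by omega) hχ
          (hA.trans (range_subset_range.2 (Nat.le_pow_clog one_lt_two N))) hmono⟩

theorem exists_coloring_fin_forall_card_lt_monochromaticBound (u N : ℕ) :
    ∃ χ : Finset (Fin N) → Bool, ∀ A, IsMonochromatic u χ A → #A < monochromaticBound u N := by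
  obtain ⟨χ, hχ⟩ := exists_coloring_forall_card_lt_monochromaticBound u N
  refine ⟨χ ∘ map Fin.valEmbedding, fun A hA => ?_⟩
  rw [← isMonochromatic_map_iff] at hA
  simpa using hχ _ (fun x hx => by simp at hx ⊢; grind) hA

end LowerBound

section Growth

open Filter

lemma Nat.tendsto_log_two_atTop : Tendsto (Nat.log 2) atTop atTop :=
  tendsto_atTop_atTop.2 fun b => ⟨2 ^ b, fun _ hn => Nat.le_log_of_pow_le one_lt_two hn⟩

lemma Nat.tendsto_clog_two_atTop : Tendsto (Nat.clog 2) atTop atTop :=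
  tendsto_atTop_mono (Nat.log_le_clog 2) Nat.tendsto_log_two_atTop

lemma eventually_mul_sqrt_add_le (a b : ℕ) : ∀ᶠ x in atTop, a * Nat.sqrt x + b ≤ x := by
  filter_upwards [eventually_ge_atTop ((a + b + 1) ^ 2)] with x hx
  have hs : a + b + 1 ≤ Nat.sqrt x := Nat.le_sqrt'.2 hx
  nlinarith [Nat.sqrt_le' x]

lemma eventually_mul_add_le_two_pow (a b : ℕ) : ∀ᶠ x in atTop, a * x + b ≤ 2 ^ x := by
  filter_upwards [eventually_ge_atTop (2 * a + 2 * b + 3)] with x hx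
  have h := Nat.descFactorial_eq_factorial_mul_choose x 2
  simp [Nat.descFactorial_succ, Nat.factorial] at h
  have := Nat.choose_le_two_pow x 2
  rcases x with _ | x
  · omega
  · simp at h
    nlinarith

lemma eventually_mul_log_add_le (a b : ℕ) : ∀ᶠ n in atTop, a * Nat.log 2 n + b ≤ n := by
  filter_upwards [Nat.tendsto_log_two_atTop.eventually (eventually_mul_add_le_two_pow a b),
    eventually_ge_atTop 1] with n hn hn₁
  exact hn.trans (Nat.pow_log_le_self 2 (by omega))

lemma mul_two_pow_add_one_pow_le (c E m : ℕ) : c * (2 ^ E + 1) ^ m ≤ 2 ^ (c + (E + 1) * m) := by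
  rw [pow_add, pow_mul]
  exact Nat.mul_le_mul Nat.lt_two_pow_self.le
    (Nat.pow_le_pow_left (by rw [pow_succ]; have := Nat.one_le_two_pow (n := E); omega) m)

lemma eventually_mul_erdosRadoBound_add_one_pow_le (r k : ℕ) : ∀ a b c : ℕ, ∀ᶠ n in atTop,
    c * (erdosRadoBound (k + 2) r (a * monochromaticBound (k + 3) n + b) + 1) ^ (k + 2) ≤ n := by
  induction k with
  | zero =>
    intro a b c
    filter_upwards [Nat.tendsto_log_two_atTop.eventually (eventually_mul_sqrt_add_le
      (6 * r * r * a) (2 * r * (r * (9 * a + b) + 1) + c + 2)), eventually_ge_atTop 1]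
      with n hx hn
    set s := Nat.sqrt (Nat.log 2 n)
    calc c * (erdosRadoBound 2 r (a * monochromaticBound 3 n + b) + 1) ^ 2
        = c * (2 ^ (r * (r * (a * (3 * s + 9) + b) + 1)) + 1) ^ 2 := by
          simp [erdosRadoBound, monochromaticBound, s]
      _ ≤ 2 ^ (c + (r * (r * (a * (3 * s + 9) + b) + 1) + 1) * 2) :=
          mul_two_pow_add_one_pow_le _ _ _
      _ ≤ 2 ^ Nat.log 2 n := Nat.pow_le_pow_right two_pos (by nlinarith)
      _ ≤ n := Nat.pow_log_le_self 2 (by omega)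
  | succ k ih =>
    intro a b c
    filter_upwards [Nat.tendsto_clog_two_atTop.eventually
      (ih (2 * a) (a * (k + 3) + b) (c + (k + 3) * (r + 1) + 1)), eventually_ge_atTop 2]
      with n hν hn
    set ν := Nat.clog 2 n
    set Y := (erdosRadoBound (k + 2) r (2 * a * monochromaticBound (k + 3) ν + (a * (k + 3) + b))
      + 1) ^ (k + 2)
    have hY : 1 ≤ Y := Nat.one_le_pow _ _ (by omega)
    calc c * (erdosRadoBound (k + 3) r (a * monochromaticBound (k + 4) n + b) + 1) ^ (k + 3)
        = c * (2 ^ (r * Y) + 1) ^ (k + 3) := by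
          simp only [erdosRadoBound, monochromaticBound, Y, ν]
          ring_nf
      _ ≤ 2 ^ (c + (r * Y + 1) * (k + 3)) := mul_two_pow_add_one_pow_le _ _ _
      _ ≤ 2 ^ (ν - 1) := by
          refine Nat.pow_le_pow_right two_pos ?_
          have := Nat.le_mul_of_pos_right c hY
          have := Nat.le_mul_of_pos_right (k + 3) hY
          have : c + (r * Y + 1) * (k + 3) + 1 ≤ ν := by nlinarith
          omega
      _ ≤ n := (Nat.pow_pred_clog_lt_self one_lt_two (by omega)).le

theorem eventually_erdosRadoBound_monochromaticBound_le (r : ℕ) {k : ℕ} (hk : 1 ≤ k) :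
    ∀ᶠ N in atTop, erdosRadoBound k r (monochromaticBound (k + 1) N) ≤ N := by
  obtain rfl | ⟨k, rfl⟩ : k = 1 ∨ ∃ k', k = k' + 2 := by
    rcases k with _ | _ | k <;> simp_all
  · filter_upwards [eventually_mul_log_add_le (2 * r) (4 * r)] with N hN
    simp only [erdosRadoBound, monochromaticBound]
    linarith
  · filter_upwards [eventually_mul_erdosRadoBound_add_one_pow_le r k 1 0 1] with N hN
    simp only [one_mul, add_zero] at hN
    exact (Nat.lt_succ_self _).le.trans ((Nat.le_self_pow (by omega) _).trans hN)

end Growth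

theorem ramsey_disparity_general (k : ℕ) (hk : 1 ≤ k)
    (ι : Type) [Fintype ι] (ar : ι → ℕ) :
    ∃ (f : ℕ → ℕ) (n₀ : ℕ), ∀ N : ℕ, n₀ < N →
      ((∀ (R : ∀ i, (Fin (ar i) → Fin N) → Prop)
          (lt : Fin N → Fin N → Prop), IsStrictTotalOrder (Fin N) lt →
          ∃ A' : Finset (Fin N), f N ≤ A'.card ∧
            ∀ a b : Fin k → Fin N,
              (∀ i j : Fin k, i < j → lt (a i) (a j)) →
              (∀ i j : Fin k, i < j → lt (b i) (b j)) →
              (∀ i, a i ∈ A') → (∀ i, b i ∈ A') →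
              ∀ (i : ι) (σ : Fin (ar i) → Fin k),
                ((R i fun j => a (σ j)) ↔ (R i fun j => b (σ j))))
        ∧
        (∃ B B' : Finset (Finset (Fin N)),
          Disjoint B B' ∧
          B ∪ B' = Finset.powersetCard (k + 1) (Finset.univ : Finset (Fin N)) ∧
          ∀ A' : Finset (Fin N), f N ≤ A'.card →
            (∃ b ∈ B, b ⊆ A') ∧ (∃ b' ∈ B', b' ⊆ A'))) := by
  classical
  obtain ⟨n₀, hn₀⟩ := (eventually_erdosRadoBound_monochromaticBound_le
    (Fintype.card ((Σ i, Fin (ar i) → Fin k) → Prop)) hk).exists_forall_of_atTop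
  refine ⟨monochromaticBound (k + 1), n₀, fun N hN => ⟨fun R lt _ => ?_, ?_⟩⟩
  · let _ := linearOrderOfSTO lt
    obtain ⟨A, -, hA, hAtp⟩ := exists_subset_forall_strictMono_eq k _
      (fun a (σ : Σ i, Fin (ar i) → Fin k) => R σ.1 (a ∘ σ.2)) (X := univ)
      (by simpa using hn₀ N hN.le)
    exact ⟨A, hA, fun a b ha hb haA hbA i σ => Iff.of_eq (congrFun
      (hAtp a b (fun _ _ h => ha _ _ h) (fun _ _ h => hb _ _ h) haA hbA) ⟨i, σ⟩)⟩
  · obtain ⟨χ, hχ⟩ := exists_coloring_fin_forall_card_lt_monochromaticBound (k + 1) N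
    exact exists_partition_powersetCard hχ

/-- Lemma (S1)/(S2): for a `k`-ary relational signature there are `f : ℕ → ℕ`
and `n₀` such that on every domain of size `N > n₀` (modelled as `Fin N`):
(S1) every structure and every linear order admit a subset of size `≥ f N` on
which all increasing `k`-tuples have the same atomic type; and
(S2) the `(k+1)`-subsets can be 2-partitioned so that every subset of size
`≥ f N` contains hyperedges of both parts. -/
theorem ramsey_disparity (k : ℕ) (hk : 1 ≤ k)
    (ι : Type) [Fintype ι] (ar : ι → ℕ) (har : ∀ i, ar i ≤ k) :
    ∃ (f : ℕ → ℕ) (n₀ : ℕ), ∀ N : ℕ, n₀ < N →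
      ((∀ (R : ∀ i, (Fin (ar i) → Fin N) → Prop)
          (lt : Fin N → Fin N → Prop), IsStrictTotalOrder (Fin N) lt →
          ∃ A' : Finset (Fin N), f N ≤ A'.card ∧
            ∀ a b : Fin k → Fin N,
              (∀ i j : Fin k, i < j → lt (a i) (a j)) →
              (∀ i j : Fin k, i < j → lt (b i) (b j)) →
              (∀ i, a i ∈ A') → (∀ i, b i ∈ A') →
              ∀ (i : ι) (σ : Fin (ar i) → Fin k),
                ((R i fun j => a (σ j)) ↔ (R i fun j => b (σ j))))
        ∧
        (∃ B B' : Finset (Finset (Fin N)),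
          Disjoint B B' ∧
          B ∪ B' = Finset.powersetCard (k + 1) (Finset.univ : Finset (Fin N)) ∧
          ∀ A' : Finset (Fin N), f N ≤ A'.card →
            (∃ b ∈ B, b ⊆ A') ∧ (∃ b' ∈ B', b' ⊆ A'))) :=
  ramsey_disparity_general k hk ι ar
end

section
/- Let A be a finite set, k ≥ 1, and let B ∪ B' be a partition of the (k+1)-element subsets of A. Construct the directed graph G on vertex set A ⊎ [A]^{k+1} with edge set {(b, b_i) : b = {b_1,...,b_{k+1}} ∈ B, 1 ≤ i ≤ k+1}. Then for b ∈ B, the graph obtained from G by adding all edges (b_i, b_j) for i ≠ j among the elements of b contains a (k+2)-clique (a set of k+2 vertices pairwise joined by an edge in at least one direction); while for b' ∈ B', the graph obtained from G by adding all edges (b'_i, b'_j) for i ≠ j among the elements of b' contains no (k+2)-clique. -/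
/-!
A clique of size `#b + 1` in `G` with `b` completed has at most one vertex `inr e`, since
hyperedges are pairwise non-adjacent. Its remaining (at least two) vertices lie in `A` and are
pairwise adjacent, which only happens inside `b`; counting, they are all of `b`, and the
hyperedge vertex `inr e` must then satisfy `e ∈ B` and `b ⊆ e`, so `e = b`. Hence the clique
exists exactly when `b ∈ B`, and for `b ∈ B` it is `{b} ∪ b` itself.
-/

open Finset SimpleGraph

section

variable {α : Type*} (B : Finset (Finset α)) (b : Finset α)

def augIncidence (u v : α ⊕ Finset α) : Prop :=
  (∃ e ∈ B, ∃ x ∈ e, u = .inr e ∧ v = .inl x) ∨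
    ∃ x ∈ b, ∃ y ∈ b, x ≠ y ∧ u = .inl x ∧ v = .inl y

def augIncidenceGraph : SimpleGraph (α ⊕ Finset α) := fromRel (augIncidence B b)

variable {B b}

@[simp]
lemma augIncidenceGraph_adj_inl_inl {x y : α} :
    (augIncidenceGraph B b).Adj (.inl x) (.inl y) ↔ x ∈ b ∧ y ∈ b ∧ x ≠ y := by
  simp only [augIncidenceGraph, fromRel_adj, augIncidence]
  grind

@[simp]
lemma augIncidenceGraph_adj_inr_inl {e : Finset α} {x : α} :
    (augIncidenceGraph B b).Adj (.inr e) (.inl x) ↔ e ∈ B ∧ x ∈ e := by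
  simp [augIncidenceGraph, augIncidence]

@[simp]
lemma augIncidenceGraph_not_adj_inr_inr {e f : Finset α} :
    ¬ (augIncidenceGraph B b).Adj (.inr e) (.inr f) := by
  simp [augIncidenceGraph, augIncidence]

lemma not_cliqueFree_augIncidenceGraph_of_mem (hb : b ∈ B) :
    ¬ (augIncidenceGraph B b).CliqueFree (#b + 1) := by
  refine IsNClique.not_cliqueFree (s := cons (.inr b) (b.map .inl) (by simp)) ⟨?_, by simp⟩
  rw [coe_cons, isClique_insert]
  refine ⟨fun u hu v hv huv => ?_, fun u hu _ => ?_⟩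
  all_goals obtain ⟨x, hx, rfl⟩ := by simpa using hu
  · obtain ⟨y, hy, rfl⟩ := by simpa using hv
    simp_all
  · simp [hb, hx]

lemma augIncidenceGraph_card_toRight_le_one {s : Finset (α ⊕ Finset α)}
    (hs : (augIncidenceGraph B b).IsClique (s : Set _)) : #s.toRight ≤ 1 :=
  card_le_one.2 fun e he f hf => by_contra fun hef =>
    augIncidenceGraph_not_adj_inr_inr (hs (mem_toRight.1 he) (mem_toRight.1 hf) (by simpa))

lemma augIncidenceGraph_toLeft_subset {s : Finset (α ⊕ Finset α)}
    (hs : (augIncidenceGraph B b).IsClique (s : Set _)) (hs' : 1 < #s.toLeft) :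
    s.toLeft ⊆ b := fun x hx => by
  obtain ⟨y, hy, hyx⟩ := exists_mem_ne hs' x
  exact (augIncidenceGraph_adj_inl_inl.1 <|
    hs (mem_toLeft.1 hx) (mem_toLeft.1 hy) (by simpa using hyx.symm)).1

lemma cliqueFree_augIncidenceGraph_of_notMem (hB : ∀ e ∈ B, #e ≤ #b) (hb : b ∉ B)
    (hb₂ : 2 ≤ #b) : (augIncidenceGraph B b).CliqueFree (#b + 1) := by
  rintro s ⟨hs, hcard⟩
  have hsum := card_toLeft_add_card_toRight (u := s)
  have hR := augIncidenceGraph_card_toRight_le_one hs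
  have hL : s.toLeft = b :=
    eq_of_subset_of_card_le (augIncidenceGraph_toLeft_subset hs (by omega)) (by omega)
  rw [hL] at hsum
  obtain ⟨e, he⟩ := card_eq_one.1 (by omega : #s.toRight = 1)
  have hadj : ∀ x ∈ b, e ∈ B ∧ x ∈ e := fun x hx =>
    augIncidenceGraph_adj_inr_inl.1 <|
      hs (mem_toRight.1 (he ▸ mem_singleton_self e)) (mem_toLeft.1 (hL ▸ hx)) (by simp)
  obtain ⟨x, hx⟩ := card_pos.1 (by omega : 0 < #b)
  have heB := (hadj x hx).1
  exact hb (eq_of_subset_of_card_le (fun x hx => (hadj x hx).2) (hB e heB) ▸ heB)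

end

lemma SimpleGraph.not_cliqueFree_fromRel_iff {V : Type*} (r : V → V → Prop) (n : ℕ) :
    ¬ (fromRel r).CliqueFree n ↔
      ∃ S : Finset V, #S = n ∧ ∀ u ∈ S, ∀ v ∈ S, u ≠ v → r u v ∨ r v u := by
  simp only [CliqueFree, isNClique_iff, isClique_iff, Set.Pairwise, fromRel_adj]
  grind

/-- Lower bound construction: on vertex set `A ⊎ [A]^{k+1}` with edges from
each hyperedge `b ∈ B` to its elements, completing a hyperedge of `B` creates
a `(k+2)`-clique, while completing a hyperedge of `B'` does not. -/
theorem clique_lower_bound_construction (A : Type) [Fintype A] [DecidableEq A]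
    (k : ℕ) (hk : 1 ≤ k) (B B' : Finset (Finset A)) (hdisj : Disjoint B B')
    (hpart : B ∪ B' = Finset.powersetCard (k + 1) (Finset.univ : Finset A)) :
    let V := A ⊕ Finset A
    let E0 : V → V → Prop := fun u v =>
      ∃ e ∈ B, ∃ x ∈ e, u = Sum.inr e ∧ v = Sum.inl x
    let aug : Finset A → V → V → Prop := fun e u v =>
      E0 u v ∨ ∃ x ∈ e, ∃ y ∈ e, x ≠ y ∧ u = Sum.inl x ∧ v = Sum.inl y
    let hasClique : (V → V → Prop) → Prop := fun E =>
      ∃ S : Finset V, S.card = k + 2 ∧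
        ∀ u ∈ S, ∀ v ∈ S, u ≠ v → E u v ∨ E v u
    (∀ b ∈ B, hasClique (aug b)) ∧ (∀ b' ∈ B', ¬ hasClique (aug b')) := by
  intro V E0 aug hasClique
  have hcard : ∀ e ∈ B ∪ B', #e = k + 1 := fun e he => (mem_powersetCard.1 (hpart ▸ he)).2
  refine ⟨fun b hb => ?_, fun b' hb' => ?_⟩
  · have hclique := not_cliqueFree_augIncidenceGraph_of_mem hb
    rw [hcard b (mem_union_left _ hb)] at hclique
    exact (not_cliqueFree_fromRel_iff _ _).1 hclique
  · have hb'card := hcard b' (mem_union_right _ hb')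
    have hfree := cliqueFree_augIncidenceGraph_of_notMem
      (fun e he => (hcard e (mem_union_left _ he)).trans hb'card.symm |>.le)
      (disjoint_right.1 hdisj hb') (by omega)
    rw [hb'card] at hfree
    exact fun h => (not_cliqueFree_fromRel_iff _ _).2 h hfree
end

section
/- Let m, k ≥ 1 and let τ be a signature containing relation symbols of arity at most k and function symbols of arity at most 1, with finitely many symbols. There is a function g : ℕ → ℕ with g ∈ Ω(log^{(k-1)} n) such that for every finite τ-structure S with domain D and every linear order < on D, there is a subset D' ⊆ D with |D'| ≥ g(|D|) such that any two <-increasing k-tuples over D' are m-similar in S. -/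
/-- Iterated binary logarithm. -/
def ilog (j n : ℕ) : ℕ := (Nat.log 2)^[j] n

/-- Application of a term given by a word of unary function symbols. -/
def tapp {D φ : Type} (F : φ → D → D) (w : List φ) (d : D) : D :=
  w.foldr (fun f x => F f x) d

/-- Two `k`-tuples are `m`-similar: their `m`-neighborhood vectors have the
same quantifier-free atomic type over the relational symbols and equality. -/
def mSimilar {D ι φ : Type} (ar : ι → ℕ)
    (R : ∀ i, (Fin (ar i) → D) → Prop) (F : φ → D → D)
    (m k : ℕ) (a b : Fin k → D) : Prop :=
  (∀ w w' : List φ, w.length ≤ m → w'.length ≤ m → ∀ i i' : Fin k,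
      (tapp F w (a i) = tapp F w' (a i') ↔ tapp F w (b i) = tapp F w' (b i'))) ∧
  (∀ (j : ι) (σ : Fin (ar j) → {w : List φ // w.length ≤ m} × Fin k),
      ((R j fun t => tapp F (σ t).1.1 (a (σ t).2)) ↔
       (R j fun t => tapp F (σ t).1.1 (b (σ t).2))))

set_option maxHeartbeats 1000000

lemma ilog_zero_arg (j : ℕ) : ilog j 0 = 0 :=
  Function.iterate_fixed (by simp) j

lemma ilog_mono (j : ℕ) : Monotone (ilog j) :=
  Nat.log_monotone.iterate j

lemma ilog_succ (j n : ℕ) : ilog (j+1) n = ilog j (Nat.log 2 n) :=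
  Function.iterate_succ_apply (Nat.log 2) j n

lemma log2_mul_le (a b : ℕ) : Nat.log 2 (a * b) ≤ Nat.log 2 a + Nat.log 2 b + 1 := by
  rcases Nat.eq_zero_or_pos a with rfl | ha; · simp
  rcases Nat.eq_zero_or_pos b with rfl | hb; · simp
  have h : a * b < 2 ^ (Nat.log 2 a + Nat.log 2 b + 2) := by
    calc a * b < 2 ^ (Nat.log 2 a + 1) * 2 ^ (Nat.log 2 b + 1) :=
          Nat.mul_lt_mul'' (Nat.lt_pow_succ_log_self one_lt_two a)
            (Nat.lt_pow_succ_log_self one_lt_two b)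
      _ = 2 ^ (Nat.log 2 a + Nat.log 2 b + 2) := by ring
  have := Nat.log_lt_of_lt_pow (by positivity) h
  omega

lemma ilog_mul_le (j : ℕ) : ∀ c₀ : ℕ, ∃ c₁, 0 < c₁ ∧ ∃ M, ∀ m, M ≤ m → ilog j (c₀ * m) ≤ c₁ * ilog j m := by
  induction j with
  | zero => exact fun c₀ => ⟨c₀ + 1, by omega, 0, fun m _ => by
      simp only [ilog, Function.iterate_zero, id_eq]; nlinarith⟩
  | succ j ih =>
    intro c₀
    rcases Nat.eq_zero_or_pos c₀ with rfl | hc₀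
    · exact ⟨1, one_pos, 0, fun m _ => by simp [ilog_zero_arg]⟩
    obtain ⟨c₁, hc₁, M, hM⟩ := ih (Nat.log 2 c₀ + 2)
    refine ⟨c₁, hc₁, 2 ^ (max M 1 + 1), fun m hm => ?_⟩
    have hm1 : 1 ≤ m := le_trans (Nat.one_le_two_pow) hm
    have hlm : max M 1 ≤ Nat.log 2 m := by
      rw [Nat.le_log_iff_pow_le one_lt_two (by omega)]
      exact le_trans (Nat.pow_le_pow_right (by omega) (by omega)) hm
    have hlog : Nat.log 2 (c₀ * m) ≤ (Nat.log 2 c₀ + 2) * Nat.log 2 m := by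
      have h1 := log2_mul_le c₀ m
      have h2 : 1 ≤ Nat.log 2 m := le_trans (le_max_right _ _) hlm
      nlinarith
    calc ilog (j+1) (c₀ * m) = ilog j (Nat.log 2 (c₀ * m)) := ilog_succ _ _
      _ ≤ ilog j ((Nat.log 2 c₀ + 2) * Nat.log 2 m) := ilog_mono j hlog
      _ ≤ c₁ * ilog j (Nat.log 2 m) := hM _ (le_trans (le_max_left _ _) hlm)
      _ = c₁ * ilog (j+1) m := by rw [ilog_succ]

lemma le_two_mul_div {x q : ℕ} (hq : 0 < q) (hx : q ≤ x) : x ≤ 2 * q * (x / q) := by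
  calc x = q * (x / q) + x % q := (Nat.div_add_mod x q).symm
    _ ≤ q * (x / q) + q := Nat.add_le_add_left (le_of_lt (Nat.mod_lt x hq)) _
    _ ≤ q * (x / q) + q * (x / q) :=
        Nat.add_le_add_left (Nat.le_mul_of_pos_right q ((Nat.one_le_div_iff hq).mpr hx)) _
    _ = 2 * q * (x / q) := by ring

lemma log2_le_mul_log {Q n : ℕ} (hQ : 2 ≤ Q) (hn : Q ≤ n) :
    Nat.log 2 n ≤ 2 * (Nat.log 2 Q + 1) * Nat.log Q n := by
  set b := Nat.log 2 Q + 1 with hb_def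
  set L := Nat.log Q n with hL_def
  have hL1 : 1 ≤ L := Nat.log_pos (by omega) hn
  have h1 : n < 2 ^ (b * (L + 1)) := by
    calc n < Q ^ (L + 1) := Nat.lt_pow_succ_log_self (by omega) n
      _ ≤ (2 ^ b) ^ (L + 1) :=
          Nat.pow_le_pow_left (le_of_lt (Nat.lt_pow_succ_log_self one_lt_two Q)) _
      _ = 2 ^ (b * (L + 1)) := by rw [← pow_mul]
  have h2 : Nat.log 2 n < b * (L + 1) := Nat.log_lt_of_lt_pow (by omega) h1
  calc Nat.log 2 n ≤ b * (L + 1) := le_of_lt h2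
    _ ≤ b * (2 * L) := Nat.mul_le_mul_left b (by omega)
    _ = 2 * b * L := by ring

open Finset

lemma build {α : Type} [LinearOrder α] {C : Type} [Fintype C] [Nonempty C]
    (k : ℕ) (c : (Fin (k+1) → α) → C) :
    ∀ (t : ℕ) (X A : Finset α),
      (∀ x ∈ X, ∀ a ∈ A, x < a) →
      (∀ b : Fin k → α, (∀ l, b l ∈ X) → ∀ y ∈ A, ∀ y' ∈ A,
         c (Fin.snoc b y) = c (Fin.snoc b y')) →
      (2 * Fintype.card C ^ (X.card + t) ^ k) ^ t ≤ A.card →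
      ∃ B : Finset α, B ⊆ A ∧ B.card = t ∧
        ∀ b : Fin k → α, (∀ l, b l ∈ X ∪ B) →
          ∀ y ∈ B, ∀ y' ∈ B, (∀ l, b l < y) → (∀ l, b l < y') →
            c (Fin.snoc b y) = c (Fin.snoc b y') := by
  classical
  intro t
  induction t with
  | zero =>
    intro X A _ _ _
    exact ⟨∅, empty_subset _, card_empty, fun b _ y hy => absurd hy (notMem_empty y)⟩
  | succ t ih =>
    intro X A h1 h2 hcard
    set q := Fintype.card C with hq_def
    have hq : 1 ≤ q := Fintype.card_pos
    set M := X.card + (t + 1) with hM_def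
    set P := q ^ M ^ k with hP_def
    have hP1 : 1 ≤ P := Nat.one_le_pow _ _ hq
    have hA : (2 * P) ^ (t + 1) ≤ A.card := hcard
    have hA2 : 2 ≤ A.card := le_trans (le_trans (by omega) (Nat.le_self_pow (by omega) (2*P))) hA
    have hAne : A.Nonempty := card_pos.mp (by omega)
    set x₀ := A.min' hAne with hx₀_def
    have hx₀A : x₀ ∈ A := A.min'_mem hAne
    set X' : Finset α := insert x₀ X with hX'_def
    set f : α → ((Fin k → {x // x ∈ X'}) → C) :=
      (fun a => fun b => c (Fin.snoc (fun l => (b l : α)) a)) with hf_def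
    have hcardfun : Fintype.card ((Fin k → {x // x ∈ X'}) → C) ≤ P := by
      rw [Fintype.card_fun, hP_def]
      apply Nat.pow_le_pow_right hq
      rw [Fintype.card_fun, Fintype.card_coe, Fintype.card_fin]
      apply Nat.pow_le_pow_left
      calc X'.card ≤ X.card + 1 := card_insert_le _ _
        _ ≤ M := by omega
    -- pigeonhole on A.erase x₀
    set n := (2 * q ^ (X'.card + t) ^ k) ^ t with hn_def
    have hn_le : n ≤ (2 * P) ^ t := by
      apply Nat.pow_le_pow_left
      have : X'.card + t ≤ M := le_trans (Nat.add_le_add_right (card_insert_le _ _) t) (by omega)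
      have := Nat.pow_le_pow_left this k
      have := Nat.pow_le_pow_right hq this
      omega
    have hpigeon : ∃ v ∈ (Finset.univ : Finset ((Fin k → {x // x ∈ X'}) → C)),
        n ≤ ((A.erase x₀).filter fun a => f a = v).card := by
      apply exists_le_card_fiber_of_mul_le_card_of_maps_to (fun a _ => mem_univ _)
        univ_nonempty
      rw [card_univ, card_erase_of_mem hx₀A]
      calc Fintype.card ((Fin k → {x // x ∈ X'}) → C) * n ≤ P * (2*P)^t :=
            Nat.mul_le_mul hcardfun hn_le
        _ ≤ A.card - 1 := by
            have h4 : 1 ≤ P * (2*P)^t := Nat.one_le_iff_ne_zero.mpr (by positivity)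
            have h5 : 2 * (P * (2*P)^t) ≤ A.card := by
              calc 2 * (P * (2*P)^t) = (2*P)^(t+1) := by ring
                _ ≤ A.card := hA
            set Z := P * (2*P)^t
            omega
    obtain ⟨v, _, hv⟩ := hpigeon
    set A' := (A.erase x₀).filter (fun a => f a = v) with hA'_def
    have hA'sub : A' ⊆ A.erase x₀ := filter_subset _ _
    have hA'subA : A' ⊆ A := hA'sub.trans (erase_subset _ _)
    have hx₀lt : ∀ a ∈ A', x₀ < a := by
      intro a ha
      have h5 := hA'sub ha
      exact lt_of_le_of_ne (A.min'_le a (mem_of_mem_erase h5)) (Ne.symm (ne_of_mem_erase h5))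
    -- invariants for recursive call
    have inv1 : ∀ x ∈ X', ∀ a ∈ A', x < a := by
      intro x hx a ha
      rcases mem_insert.mp hx with rfl | hx
      · exact hx₀lt a ha
      · exact h1 x hx a (hA'subA ha)
    have inv2 : ∀ b : Fin k → α, (∀ l, b l ∈ X') → ∀ y ∈ A', ∀ y' ∈ A',
        c (Fin.snoc b y) = c (Fin.snoc b y') := by
      intro b hb y hy y' hy'
      have hfy : f y = v := (mem_filter.mp hy).2
      have hfy' : f y' = v := (mem_filter.mp hy').2
      have e1 := congrFun hfy (fun l => ⟨b l, hb l⟩)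
      have e2 := congrFun hfy' (fun l => ⟨b l, hb l⟩)
      simpa [hf_def] using e1.trans e2.symm
    obtain ⟨B', hB'sub, hB'card, hB'prop⟩ := ih X' A' inv1 inv2 hv
    have hx₀notB' : x₀ ∉ B' := fun h => (notMem_erase x₀ A) (hA'sub (hB'sub h))
    refine ⟨insert x₀ B', ?_, ?_, ?_⟩
    · exact insert_subset hx₀A (hB'sub.trans hA'subA)
    · rw [card_insert_of_notMem hx₀notB', hB'card]
    · intro b hb y hy y' hy' hby hby'
      -- helper : any entry of b below x₀ is in X
      have key : ∀ y₁, y₁ ∈ insert x₀ B' → (∀ l, b l < y₁) → ∀ y₂ ∈ B',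
          c (Fin.snoc b y₁) = c (Fin.snoc b y₂) → True := fun _ _ _ _ _ _ => trivial
      have hcase : ∀ y₁ ∈ B', (∀ l, b l < y₁) → ∀ y₂ ∈ B', (∀ l, b l < y₂) →
          c (Fin.snoc b y₁) = c (Fin.snoc b y₂) := by
        intro y₁ h₁ hb₁ y₂ h₂ hb₂
        apply hB'prop b _ y₁ h₁ y₂ h₂ hb₁ hb₂
        intro l
        rcases mem_union.mp (hb l) with hl | hl
        · exact mem_union_left _ (mem_insert_of_mem hl)
        · rcases mem_insert.mp hl with h | hl
          · exact mem_union_left _ (by rw [h]; exact mem_insert_self _ _)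
          · exact mem_union_right _ hl
      have hX₀case : ∀ y₂ ∈ B', (∀ l, b l < x₀) →
          c (Fin.snoc b x₀) = c (Fin.snoc b y₂) := by
        intro y₂ h₂ hbx
        have hbX : ∀ l, b l ∈ X := by
          intro l
          rcases mem_union.mp (hb l) with hl | hl
          · exact hl
          · rcases mem_insert.mp hl with h | h
            · exact absurd (hbx l) (by rw [h]; exact lt_irrefl _)
            · exact absurd (hbx l) (not_lt.mpr (le_of_lt (hx₀lt _ (hB'sub h))))
        exact h2 b hbX x₀ hx₀A y₂ (hA'subA (hB'sub h₂))
      rcases mem_insert.mp hy with rfl | hyB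
      · rcases mem_insert.mp hy' with rfl | hy'B
        · rfl
        · exact hX₀case y' hy'B hby
      · rcases mem_insert.mp hy' with rfl | hy'B
        · exact (hX₀case y hyB hby').symm
        · exact hcase y hyB hby y' hy'B hby'

lemma stepDown {α : Type} [LinearOrder α] {C : Type} [Fintype C] [Nonempty C]
    (k t : ℕ) (hk : 1 ≤ k) (c : (Fin (k+1) → α) → C) (S : Finset α)
    (h : (2 * Fintype.card C ^ t ^ k) ^ t ≤ S.card) :
    ∃ B : Finset α, B ⊆ S ∧ B.card = t ∧
      ∀ b : Fin k → α, (∀ l, b l ∈ B) →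
        ∀ y ∈ B, ∀ y' ∈ B, (∀ l, b l < y) → (∀ l, b l < y') →
          c (Fin.snoc b y) = c (Fin.snoc b y') := by
  obtain ⟨B, hBS, hBcard, hBprop⟩ := build k c t ∅ S
    (fun x hx => absurd hx (Finset.notMem_empty x))
    (fun b hb => absurd (hb ⟨0, hk⟩) (Finset.notMem_empty _))
    (by simpa using h)
  refine ⟨B, hBS, hBcard, fun b hb => hBprop b (fun l => by
    simpa using hb l)⟩

lemma buildChain {α : Type} [LinearOrder α] {C : Type} [Fintype C] [Nonempty C]
    (c : (Fin 2 → α) → C) :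
    ∀ (t : ℕ) (A : Finset α), (2 * Fintype.card C) ^ t ≤ A.card →
      ∃ (x : Fin t → α) (γ : Fin t → C), StrictMono x ∧ (∀ i, x i ∈ A) ∧
        ∀ i j : Fin t, i < j → c ![x i, x j] = γ i := by
  classical
  intro t
  induction t with
  | zero =>
    intro A _
    exact ⟨Fin.elim0, Fin.elim0, fun i => i.elim0, fun i => i.elim0, fun i => i.elim0⟩
  | succ t ih =>
    intro A hA
    set q := Fintype.card C with hq_def
    have hq : 1 ≤ q := Fintype.card_pos
    have hA2 : 2 ≤ A.card := by
      refine le_trans ?_ hA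
      calc 2 ≤ 2 * q := by omega
        _ ≤ (2 * q) ^ (t+1) := Nat.le_self_pow (by omega) _
    have hAne : A.Nonempty := Finset.card_pos.mp (by omega)
    set x₀ := A.min' hAne with hx₀_def
    have hx₀A : x₀ ∈ A := A.min'_mem hAne
    have hpigeon : ∃ v ∈ (Finset.univ : Finset C),
        (2*q) ^ t ≤ ((A.erase x₀).filter fun a => c ![x₀, a] = v).card := by
      apply Finset.exists_le_card_fiber_of_mul_le_card_of_maps_to
        (fun a _ => Finset.mem_univ _) Finset.univ_nonempty
      rw [Finset.card_univ, Finset.card_erase_of_mem hx₀A]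
      have h5 : 2 * (q * (2*q)^t) ≤ A.card := by
        calc 2 * (q * (2*q)^t) = (2*q)^(t+1) := by ring
          _ ≤ A.card := hA
      have h4 : 1 ≤ q * (2*q)^t := Nat.one_le_iff_ne_zero.mpr (by positivity)
      set Z := q * (2*q)^t
      omega
    obtain ⟨v, _, hv⟩ := hpigeon
    set A' := (A.erase x₀).filter (fun a => c ![x₀, a] = v) with hA'_def
    have hA'sub : A' ⊆ A.erase x₀ := Finset.filter_subset _ _
    have hx₀lt : ∀ a ∈ A', x₀ < a := fun a ha =>
      lt_of_le_of_ne (A.min'_le a (Finset.mem_of_mem_erase (hA'sub ha)))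
        (Ne.symm (Finset.ne_of_mem_erase (hA'sub ha)))
    obtain ⟨x', γ', hx'mono, hx'mem, hx'prop⟩ := ih A' hv
    refine ⟨Fin.cons x₀ x', Fin.cons v γ', ?_, ?_, ?_⟩
    · intro i j hij
      rcases Fin.eq_zero_or_eq_succ j with rfl | ⟨j', rfl⟩
      · exact absurd hij (by simp [Fin.lt_def])
      · rcases Fin.eq_zero_or_eq_succ i with rfl | ⟨i', rfl⟩
        · simpa only [Fin.cons_zero, Fin.cons_succ] using hx₀lt _ (hx'mem j')
        · simp only [Fin.cons_succ]
          exact hx'mono (Fin.succ_lt_succ_iff.mp hij)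
    · intro i
      rcases Fin.eq_zero_or_eq_succ i with rfl | ⟨i', rfl⟩
      · simpa using hx₀A
      · simpa only [Fin.cons_succ] using
          Finset.mem_of_mem_erase (hA'sub (hx'mem i'))
    · intro i j hij
      rcases Fin.eq_zero_or_eq_succ j with rfl | ⟨j', rfl⟩
      · exact absurd hij (by simp [Fin.lt_def])
      · rcases Fin.eq_zero_or_eq_succ i with rfl | ⟨i', rfl⟩
        · simp only [Fin.cons_zero, Fin.cons_succ]
          exact (Finset.mem_filter.mp (hx'mem j')).2
        · simp only [Fin.cons_succ]
          exact hx'prop i' j' (Fin.succ_lt_succ_iff.mp hij)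

lemma graphRamsey {α : Type} [LinearOrder α] {C : Type} [Fintype C] [Nonempty C]
    (c : (Fin 2 → α) → C) (S : Finset α) :
    ∃ T : Finset α, T ⊆ S ∧
      Nat.log (2 * Fintype.card C) S.card / Fintype.card C ≤ T.card ∧
      ∀ a b : Fin 2 → α, StrictMono a → StrictMono b →
        (∀ i, a i ∈ T) → (∀ i, b i ∈ T) → c a = c b := by
  classical
  set q := Fintype.card C with hq_def
  have hq : 1 ≤ q := Fintype.card_pos
  rcases Nat.eq_zero_or_pos S.card with h0 | hpos
  · exact ⟨∅, Finset.empty_subset _, by simp [h0], fun a b _ _ ha _ =>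
      absurd (ha 0) (Finset.notMem_empty _)⟩
  set L := Nat.log (2 * q) S.card with hL_def
  obtain ⟨x, γ, hxmono, hxmem, hxprop⟩ := buildChain c L S
    (Nat.pow_log_le_self (2 * q) (by omega))
  have hpigeon : ∃ v ∈ (Finset.univ : Finset C),
      L / q ≤ ((Finset.univ : Finset (Fin L)).filter fun i => γ i = v).card := by
    apply Finset.exists_le_card_fiber_of_mul_le_card_of_maps_to
      (fun a _ => Finset.mem_univ _) Finset.univ_nonempty
    rw [Finset.card_univ, Finset.card_univ, Fintype.card_fin]
    calc q * (L / q) = L / q * q := by ring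
      _ ≤ L := Nat.div_mul_le_self _ _
  obtain ⟨v, _, hv⟩ := hpigeon
  set I := (Finset.univ : Finset (Fin L)).filter (fun i => γ i = v) with hI_def
  refine ⟨I.image x, ?_, ?_, ?_⟩
  · intro y hy
    obtain ⟨i, _, rfl⟩ := Finset.mem_image.mp hy
    exact hxmem i
  · rw [Finset.card_image_of_injective _ hxmono.injective]; exact hv
  · have key : ∀ a : Fin 2 → α, StrictMono a → (∀ i, a i ∈ I.image x) → c a = v := by
      intro a ha haT
      obtain ⟨i, hiI, hi⟩ := Finset.mem_image.mp (haT 0)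
      obtain ⟨j, hjI, hj⟩ := Finset.mem_image.mp (haT 1)
      have hij : i < j := by
        apply hxmono.lt_iff_lt.mp
        rw [hi, hj]
        exact ha (by simp [Fin.lt_def])
      have ha2 : a = ![x i, x j] := by
        funext l
        fin_cases l
        · simp [hi.symm]
        · simp [hj.symm]
      rw [ha2, hxprop i j hij]
      exact (Finset.mem_filter.mp hiI).2
    intro a b ha hb haT hbT
    rw [key a ha haT, key b hb hbT]
theorem ramseyAux (C : Type) [Fintype C] [Nonempty C] :
    ∀ k : ℕ, 1 ≤ k →
    ∃ g : ℕ → ℕ,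
      (∃ c : ℕ, 0 < c ∧ ∃ N₀ : ℕ, ∀ n, N₀ ≤ n → ilog (k - 1) n ≤ c * g n) ∧
      ∀ (α : Type) [LinearOrder α] (S : Finset α) (col : (Fin k → α) → C),
        ∃ T : Finset α, T ⊆ S ∧ g S.card ≤ T.card ∧
          ∀ a b : Fin k → α, StrictMono a → StrictMono b →
            (∀ i, a i ∈ T) → (∀ i, b i ∈ T) → col a = col b := by
  classical
  set q := Fintype.card C with hq_def
  have hq : 1 ≤ q := Fintype.card_pos
  intro k
  induction k with
  | zero => omega
  | succ k ih =>
    intro _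
    match k, ih with
    | 0, _ =>
      -- arity 1 : pigeonhole
      refine ⟨fun n => n / q, ⟨2 * q, by omega, q, fun n hn => ?_⟩, ?_⟩
      · simpa [ilog] using le_two_mul_div (by omega) hn
      · intro α _ S col
        have hpigeon : ∃ v ∈ (Finset.univ : Finset C),
            S.card / q ≤ (S.filter fun x => col (fun _ => x) = v).card := by
          apply Finset.exists_le_card_fiber_of_mul_le_card_of_maps_to
            (fun a _ => Finset.mem_univ _) Finset.univ_nonempty
          rw [Finset.card_univ, ← hq_def]
          calc q * (S.card / q) = S.card / q * q := by ring
            _ ≤ S.card := Nat.div_mul_le_self _ _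
        obtain ⟨v, _, hv⟩ := hpigeon
        refine ⟨S.filter (fun x => col (fun _ => x) = v), Finset.filter_subset _ _, hv, ?_⟩
        have key : ∀ a : Fin 1 → α,
            (∀ i, a i ∈ S.filter (fun x => col (fun _ => x) = v)) → col a = v := by
          intro a haT
          have ha2 : a = fun _ => a 0 := funext fun l => congrArg a (Subsingleton.elim l 0)
          rw [ha2]
          exact (Finset.mem_filter.mp (haT 0)).2
        intro a b _ _ haT hbT
        rw [key a haT, key b hbT]
    | 1, _ =>
      -- arity 2 : graph Ramsey
      refine ⟨fun n => Nat.log (2 * q) n / q,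
        ⟨4 * (Nat.log 2 (2 * q) + 1) * q, by positivity, (2 * q) ^ q, fun n hn => ?_⟩, ?_⟩
      · have hQ2 : 2 ≤ 2 * q := by omega
        have hn' : 2 * q ≤ n :=
          le_trans (Nat.le_self_pow (by omega) _) hn
        have hLq : q ≤ Nat.log (2 * q) n := by
          rw [Nat.le_log_iff_pow_le (by omega) (by omega)]
          exact hn
        have h1 : Nat.log 2 n ≤ 2 * (Nat.log 2 (2 * q) + 1) * Nat.log (2 * q) n :=
          log2_le_mul_log hQ2 hn'
        have h2 : Nat.log (2 * q) n ≤ 2 * q * (Nat.log (2 * q) n / q) :=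
          le_two_mul_div (by omega) hLq
        have : ilog 1 n = Nat.log 2 n := by simp [ilog]
        rw [this]
        calc Nat.log 2 n ≤ 2 * (Nat.log 2 (2 * q) + 1) * (2 * q * (Nat.log (2 * q) n / q)) :=
              le_trans h1 (Nat.mul_le_mul_left _ h2)
          _ = 4 * (Nat.log 2 (2 * q) + 1) * q * (Nat.log (2 * q) n / q) := by ring
      · intro α _ S col
        obtain ⟨T, hTS, hTcard, hhom⟩ := graphRamsey col S
        exact ⟨T, hTS, by rwa [← hq_def] at hTcard, hhom⟩
    | (j+2), ih =>
      -- arity j+3 : step down to arity j+2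
      obtain ⟨g', ⟨c, hc, N₀, hN₀⟩, hram'⟩ := ih (by omega)
      set Q := 2 * q with hQ_def
      have hQ2 : 2 ≤ Q := by omega
      set τ : ℕ → ℕ := fun n => 2 ^ (Nat.log 2 (Nat.log Q n) / (j + 3)) with hτ_def
      set g : ℕ → ℕ :=
        fun n => if (2 * q ^ τ n ^ (j + 2)) ^ τ n ≤ n then g' (τ n) else 0 with hg_def
      have hguard_of : ∀ n, Q ≤ n → (2 * q ^ τ n ^ (j + 2)) ^ τ n ≤ n := by
        intro n hn
        have hn0 : n ≠ 0 := by omega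
        have hL1 : 1 ≤ Nat.log Q n := Nat.log_pos (by omega) hn
        have hτ1 : 1 ≤ τ n := Nat.one_le_two_pow
        have hτpow : τ n ^ (j + 3) ≤ Nat.log Q n := by
          calc τ n ^ (j + 3) = 2 ^ (Nat.log 2 (Nat.log Q n) / (j + 3) * (j + 3)) := by
                rw [hτ_def, ← pow_mul]
            _ ≤ 2 ^ Nat.log 2 (Nat.log Q n) :=
                Nat.pow_le_pow_right (by omega) (Nat.div_mul_le_self _ _)
            _ ≤ Nat.log Q n := Nat.pow_log_le_self 2 (by omega)
        calc (2 * q ^ τ n ^ (j + 2)) ^ τ n = 2 ^ τ n * q ^ (τ n ^ (j + 2) * τ n) := by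
              rw [mul_pow, ← pow_mul]
          _ = 2 ^ τ n * q ^ (τ n ^ (j + 3)) := by rw [← pow_succ]
          _ ≤ 2 ^ (τ n ^ (j + 3)) * q ^ (τ n ^ (j + 3)) := by
              exact Nat.mul_le_mul_right _
                (Nat.pow_le_pow_right (by omega) (Nat.le_self_pow (by omega) _))
          _ = Q ^ (τ n ^ (j + 3)) := by rw [hQ_def, mul_pow]
          _ ≤ Q ^ Nat.log Q n := Nat.pow_le_pow_right (by omega) hτpow
          _ ≤ n := Nat.pow_log_le_self Q hn0
      refine ⟨g, ?_, ?_⟩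
      · -- asymptotics
        set b := Nat.log 2 Q + 1 with hb_def
        set c₅ := 2 * b with hc₅_def
        set c₆ := Nat.log 2 c₅ + 2 with hc₆_def
        set c₃ := c₆ * (2 * (j + 3)) with hc₃_def
        obtain ⟨c₁, hc₁, M, hM⟩ := ilog_mul_le j c₃
        set E := max (max N₀ M) 1 with hE_def
        refine ⟨c₁ * c, by positivity, Q ^ 2 ^ ((j + 3) * E), fun n hn => ?_⟩
        have hE1 : 1 ≤ E := le_max_right _ _
        have hexp1 : 1 ≤ (j + 3) * E := by nlinarith
        have hQn : Q ≤ n := by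
          refine le_trans ?_ hn
          calc Q = Q ^ 1 := (pow_one Q).symm
            _ ≤ Q ^ 2 ^ ((j + 3) * E) := Nat.pow_le_pow_right (by omega) Nat.one_le_two_pow
        have hn0 : n ≠ 0 := by omega
        set L := Nat.log Q n with hL_def
        have hLbig : 2 ^ ((j + 3) * E) ≤ L := by
          rw [hL_def, Nat.le_log_iff_pow_le (by omega) hn0]
          exact hn
        have hL1 : 1 ≤ L := le_trans Nat.one_le_two_pow hLbig
        have hl2L : (j + 3) * E ≤ Nat.log 2 L := by
          rw [Nat.le_log_iff_pow_le one_lt_two (by omega)]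
          exact hLbig
        set e := Nat.log 2 L / (j + 3) with he_def
        have heE : E ≤ e := by
          rw [he_def, Nat.le_div_iff_mul_le (by omega)]
          calc E * (j + 3) = (j + 3) * E := by ring
            _ ≤ Nat.log 2 L := hl2L
        have he1 : 1 ≤ e := le_trans hE1 heE
        have heN₀ : N₀ ≤ e := le_trans (le_trans (le_max_left _ _) (le_max_left _ _)) heE
        have heM : M ≤ e := le_trans (le_trans (le_max_right _ _) (le_max_left _ _)) heE
        have hguard := hguard_of n hQn
        have hgn : g n = g' (τ n) := by rw [hg_def]; simp only [if_pos hguard]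
        have hτe : τ n = 2 ^ e := by simp only [hτ_def, he_def, hL_def]
        have hlogτ : Nat.log 2 (τ n) = e := by
          rw [hτe]; exact Nat.log_pow one_lt_two _
        have hτN₀ : N₀ ≤ τ n := by
          calc N₀ ≤ e := heN₀
            _ ≤ 2 ^ e := (Nat.lt_two_pow_self (n := e)).le
            _ = τ n := hτe.symm
        have step1 : ilog (j + 2) n = ilog j (Nat.log 2 (Nat.log 2 n)) := by
          rw [show j + 2 = (j + 1) + 1 from rfl, ilog_succ, ilog_succ]
        have step2 : ilog (j + 1) (τ n) = ilog j e := by rw [ilog_succ, hlogτ]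
        have hlog2n : Nat.log 2 n ≤ c₅ * L := by
          have h := log2_le_mul_log hQ2 hQn
          rw [hc₅_def, hb_def]
          calc Nat.log 2 n ≤ 2 * (Nat.log 2 Q + 1) * Nat.log Q n := h
            _ = 2 * (Nat.log 2 Q + 1) * L := by rw [hL_def]
        have h3 : 1 ≤ Nat.log 2 L := le_trans (by nlinarith) hl2L
        have hll : Nat.log 2 (Nat.log 2 n) ≤ c₃ * e := by
          have h1 : Nat.log 2 (Nat.log 2 n) ≤ Nat.log 2 (c₅ * L) := Nat.log_monotone hlog2n
          have h2 : Nat.log 2 (c₅ * L) ≤ Nat.log 2 c₅ + Nat.log 2 L + 1 := log2_mul_le _ _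
          have h4 : Nat.log 2 c₅ + Nat.log 2 L + 1 ≤ c₆ * Nat.log 2 L := by
            rw [hc₆_def]; nlinarith
          have h5 : Nat.log 2 L ≤ 2 * (j + 3) * e := by
            rw [he_def]
            exact le_two_mul_div (by omega) (le_trans (by nlinarith : (j + 3) ≤ (j + 3) * E) hl2L)
          calc Nat.log 2 (Nat.log 2 n) ≤ c₆ * Nat.log 2 L := le_trans h1 (le_trans h2 h4)
            _ ≤ c₆ * (2 * (j + 3) * e) := Nat.mul_le_mul_left _ h5
            _ = c₃ * e := by rw [hc₃_def]; ring
        have hfinal : ilog (j + 1) (τ n) ≤ c * g' (τ n) := by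
          have := hN₀ (τ n) hτN₀
          simpa using this
        calc ilog (j + 2 + 1 - 1) n = ilog j (Nat.log 2 (Nat.log 2 n)) := step1
          _ ≤ ilog j (c₃ * e) := ilog_mono j hll
          _ ≤ c₁ * ilog j e := hM e heM
          _ = c₁ * ilog (j + 1) (τ n) := by rw [step2]
          _ ≤ c₁ * (c * g' (τ n)) := Nat.mul_le_mul_left _ hfinal
          _ = c₁ * c * g n := by rw [hgn]; ring
      · -- ramsey property
        intro α inst S col
        by_cases hguard : (2 * q ^ τ S.card ^ (j + 2)) ^ τ S.card ≤ S.card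
        · obtain ⟨B, hBS, hBcard, hBprop⟩ :=
            stepDown (j + 2) (τ S.card) (by omega) col S hguard
          set c' : (Fin (j + 2) → α) → C := fun v =>
            if h : ∃ y, y ∈ B ∧ ∀ l, v l < y then col (Fin.snoc v h.choose)
            else Classical.arbitrary C with hc'_def
          obtain ⟨T, hTB, hTcard, hThom⟩ := hram' α B c'
          refine ⟨T, hTB.trans hBS, ?_, ?_⟩
          · rw [hg_def]
            simp only [hguard, if_true, if_pos hguard]
            rw [← hBcard]
            exact hTcard
          · have key : ∀ a : Fin (j + 3) → α, StrictMono a → (∀ i, a i ∈ T) →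
                col a = c' (Fin.init a) := by
              intro a ha haT
              have hlast : a (Fin.last _) ∈ B := hTB (haT _)
              have hEx : ∃ y, y ∈ B ∧ ∀ l, Fin.init a l < y :=
                ⟨a (Fin.last _), hlast, fun l => ha (Fin.castSucc_lt_last l)⟩
              rw [hc'_def]
              simp only [dif_pos hEx]
              conv_lhs => rw [← Fin.snoc_init_self a]
              exact hBprop (Fin.init a) (fun l => hTB (haT _)) _ hlast _ hEx.choose_spec.1
                (fun l => ha (Fin.castSucc_lt_last l)) hEx.choose_spec.2
            intro a b ha hb haT hbT
            have hia : StrictMono (Fin.init a) :=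
              fun i j hij => ha (Fin.castSucc_lt_castSucc_iff.mpr hij)
            have hib : StrictMono (Fin.init b) :=
              fun i j hij => hb (Fin.castSucc_lt_castSucc_iff.mpr hij)
            rw [key a ha haT, key b hb hbT]
            exact hThom (Fin.init a) (Fin.init b) hia hib (fun l => haT _) (fun l => hbT _)
        · refine ⟨∅, Finset.empty_subset _, ?_, ?_⟩
          · rw [hg_def]; simp [hguard]
          · intro a b _ _ haT _
            exact absurd (haT 0) (Finset.notMem_empty _)

noncomputable def fintypeWordLe (φ : Type) [Fintype φ] (m : ℕ) :
    Fintype {w : List φ // w.length ≤ m} := by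
  classical
  apply Fintype.ofSurjective
    (fun p : Σ j : Fin (m+1), Fin j → φ =>
      (⟨List.ofFn p.2, by simpa using Nat.lt_succ_iff.mp p.1.isLt⟩ :
        {w : List φ // w.length ≤ m}))
  rintro ⟨w, hw⟩
  refine ⟨⟨⟨w.length, Nat.lt_succ_of_le hw⟩, fun i => w.get i⟩, ?_⟩
  simp [List.ofFn_get]

/-- For a `k`-ary signature with unary function symbols there is
`g ∈ Ω(log^{(k-1)} n)` such that every finite structure with a linear order
contains a subset of size `≥ g n` on which all increasing `k`-tuples are
pairwise `m`-similar. -/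
theorem similar_tuples_clique (m k : ℕ) (hm : 1 ≤ m) (hk : 1 ≤ k)
    (ι φ : Type) [Fintype ι] [Fintype φ] (ar : ι → ℕ) (har : ∀ i, ar i ≤ k) :
    ∃ g : ℕ → ℕ,
      (∃ C : ℕ, 0 < C ∧ ∃ N₀ : ℕ, ∀ n ≥ N₀, ilog (k - 1) n ≤ C * g n) ∧
      ∀ (N : ℕ) (R : ∀ i, (Fin (ar i) → Fin N) → Prop) (F : φ → Fin N → Fin N)
        (lt : Fin N → Fin N → Prop), IsStrictTotalOrder (Fin N) lt →
        ∃ D' : Finset (Fin N), g N ≤ D'.card ∧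
          ∀ a b : Fin k → Fin N,
            (∀ i j : Fin k, i < j → lt (a i) (a j)) →
            (∀ i j : Fin k, i < j → lt (b i) (b j)) →
            (∀ i, a i ∈ D') → (∀ i, b i ∈ D') →
            mSimilar ar R F m k a b := by
  classical
  haveI : Fintype {w : List φ // w.length ≤ m} := fintypeWordLe φ m
  set W := {w : List φ // w.length ≤ m} with hW_def
  set Col := (((W × Fin k) × (W × Fin k)) → Bool) ×
    ((Σ j : ι, (Fin (ar j) → W × Fin k)) → Bool) with hCol_def
  haveI : Fintype Col := by rw [hCol_def]; infer_instance
  haveI : Nonempty Col := ⟨fun _ => true, fun _ => true⟩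
  obtain ⟨g, hg, hram⟩ := ramseyAux Col k hk
  refine ⟨g, hg, ?_⟩
  intro N R F lt hlt
  let lo : LinearOrder (Fin N) := linearOrderOfSTO lt
  set col : (Fin k → Fin N) → Col := fun a =>
    (fun p => decide (tapp F p.1.1.1 (a p.1.2) = tapp F p.2.1.1 (a p.2.2)),
     fun p => decide (R p.1 fun t => tapp F (p.2 t).1.1 (a (p.2 t).2))) with hcol_def
  obtain ⟨T, hTS, hTcard, hhom⟩ := @hram (Fin N) lo Finset.univ col
  refine ⟨T, by simpa using hTcard, ?_⟩
  intro a b ha hb haT hbT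
  have hsa : @StrictMono (Fin k) (Fin N) _ lo.toPartialOrder.toPreorder a :=
    fun i j hij => ha i j hij
  have hsb : @StrictMono (Fin k) (Fin N) _ lo.toPartialOrder.toPreorder b :=
    fun i j hij => hb i j hij
  have hcol := hhom a b hsa hsb haT hbT
  constructor
  · intro w w' hw hw' i i'
    have h := congrFun (congrArg Prod.fst hcol) ((⟨w, hw⟩, i), (⟨w', hw'⟩, i'))
    simpa only [hcol_def] using decide_eq_decide.mp h
  · intro j σ
    have h := congrFun (congrArg Prod.snd hcol) ⟨j, σ⟩
    simpa only [hcol_def] using decide_eq_decide.mp h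
end
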